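/- arXiv:0908.0879 — 8 statements merged into one kernel-verified Lean document; each statement's English description precedes it below -/
import Mathlib

section
/- For any natural number n ≥ 1 and any m ≥ 1, the number of solutions x modulo n of the congruence x^m ≡ 1 (mod n) is at most 2·m^ω(n), where ω(n) is the number of distinct prime divisors of n. -/
/-!
A solution of `x ^ m = 1` in `ZMod n` is a unit, and by the Chinese remainder theorem the number
of solutions is multiplicative in `n`. For an odd prime power the unit group is cyclic, so it has
at most `m` elements of order dividing `m`. For `2 ^ k` the unit group is not cyclic, but it has
the cyclic subgroup generated by `5` of index `2`; an abelian group with a cyclic subgroup of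
index `i` has at most `i * m` such elements. Only the power of `2` in `n` contributes the factor
`2`.
-/

section PowEqOne

variable {M N : Type*} [CommMonoid M] [CommMonoid N] {m : ℕ}

theorem MulEquiv.natCard_pow_eq_one_eq (e : M ≃* N) :
    Nat.card {x : M // x ^ m = 1} = Nat.card {y : N // y ^ m = 1} :=
  Nat.card_congr <| e.toEquiv.subtypeEquiv fun x => by simp [← map_pow]

theorem natCard_prod_pow_eq_one :
    Nat.card {x : M × N // x ^ m = 1} =
      Nat.card {x : M // x ^ m = 1} * Nat.card {y : N // y ^ m = 1} := by
  rw [← Nat.card_prod]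
  exact Nat.card_congr <| (Equiv.subtypeEquivRight fun x => by simp [Prod.ext_iff]).trans
    Equiv.subtypeProdEquivProd

theorem Units.natCard_pow_eq_one (hm : m ≠ 0) :
    Nat.card {u : Mˣ // u ^ m = 1} = Nat.card {x : M // x ^ m = 1} :=
  Nat.card_congr
    { toFun := fun u => ⟨u.1, by rw [← Units.val_pow_eq_pow_val, u.2, Units.val_one]⟩
      invFun := fun x => ⟨Units.ofPowEqOne x.1 m x.2 hm, Units.pow_ofPowEqOne x.2 hm⟩
      left_inv := fun u => by ext; simp
      right_inv := fun x => by ext; simp }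

end PowEqOne

theorem IsCyclic.natCard_pow_eq_one_le {G : Type*} [Group G] [Finite G] [IsCyclic G] {m : ℕ}
    (hm : m ≠ 0) : Nat.card {g : G // g ^ m = 1} ≤ m := by
  classical
  have : Fintype G := Fintype.ofFinite G
  rw [Nat.card_eq_fintype_card, Fintype.card_subtype]
  exact IsCyclic.card_pow_eq_one_le (Nat.pos_of_ne_zero hm)

theorem Subgroup.natCard_pow_eq_one_le_index_mul {G : Type*} [CommGroup G] [Finite G]
    (H : Subgroup G) [IsCyclic H] {m : ℕ} (hm : m ≠ 0) :
    Nat.card {g : G // g ^ m = 1} ≤ H.index * m := by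
  set T := (powMonoidHom m : G →* G).ker
  have hT : Nat.card {g : G // g ^ m = 1} = Nat.card T :=
    Nat.card_congr <| Equiv.subtypeEquivRight fun g => by
      rw [MonoidHom.mem_ker, powMonoidHom_apply]
  have hHT : Nat.card (H.subgroupOf T) ≤ m :=
    calc Nat.card (H.subgroupOf T) ≤ Nat.card {h : H // h ^ m = 1} :=
          Nat.card_le_card_of_injective
            (fun h => ⟨⟨h.1.1, Subgroup.mem_subgroupOf.mp h.2⟩, Subtype.ext h.1.2⟩)
            fun _ _ hh => Subtype.ext <| Subtype.ext <| congrArg (fun x => x.1.1) hh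
      _ ≤ m := IsCyclic.natCard_pow_eq_one_le hm
  have hrel : H.relIndex T ≤ H.index :=
    Nat.le_of_dvd (Nat.pos_of_ne_zero H.index_ne_zero_of_finite)
      (Subgroup.relIndex_dvd_index_of_normal H T)
  calc Nat.card {g : G // g ^ m = 1} = Nat.card (H.subgroupOf T) * H.relIndex T := by
        rw [hT, Subgroup.relIndex, Subgroup.card_mul_index]
    _ ≤ m * H.index := Nat.mul_le_mul hHT hrel
    _ = H.index * m := Nat.mul_comm _ _

namespace ZMod

theorem natCard_pow_eq_one_mul {a b : ℕ} (h : a.Coprime b) (m : ℕ) :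
    Nat.card {x : ZMod (a * b) // x ^ m = 1} =
      Nat.card {x : ZMod a // x ^ m = 1} * Nat.card {y : ZMod b // y ^ m = 1} := by
  rw [(chineseRemainder h).toMulEquiv.natCard_pow_eq_one_eq, natCard_prod_pow_eq_one]

theorem natCard_pow_eq_one_prime_pow_le {p : ℕ} (hp : p.Prime) (hp2 : p ≠ 2) (k : ℕ) {m : ℕ}
    (hm : m ≠ 0) : Nat.card {x : ZMod (p ^ k) // x ^ m = 1} ≤ m := by
  have : NeZero (p ^ k) := ⟨pow_ne_zero k hp.ne_zero⟩
  have := isCyclic_units_of_prime_pow p hp hp2 k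
  rw [← Units.natCard_pow_eq_one hm]
  exact IsCyclic.natCard_pow_eq_one_le hm

theorem natCard_pow_eq_one_two_pow_le (k : ℕ) {m : ℕ} (hm : m ≠ 0) :
    Nat.card {x : ZMod (2 ^ k) // x ^ m = 1} ≤ 2 * m := by
  rw [← Units.natCard_pow_eq_one hm]
  obtain hk | ⟨j, rfl⟩ : k ≤ 2 ∨ ∃ j, k = j + 2 :=
    (le_or_gt k 2).imp_right fun hk => ⟨k - 2, by omega⟩
  · have := (isCyclic_units_two_pow_iff k).mpr hk
    have : NeZero (2 ^ k) := ⟨pow_ne_zero k two_ne_zero⟩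
    exact (IsCyclic.natCard_pow_eq_one_le hm).trans (Nat.le_mul_of_pos_left m two_pos)
  set u : (ZMod (2 ^ (j + 2)))ˣ := unitOfCoprime 5 (Nat.Coprime.pow_right _ (by norm_num))
  have hindex : (Subgroup.zpowers u).index = 2 := by
    have hcard := (Subgroup.zpowers u).card_mul_index
    rw [Nat.card_zpowers, ← orderOf_units, coe_unitOfCoprime, Nat.cast_ofNat, orderOf_five,
      Nat.card_eq_fintype_card, card_units_eq_totient, Nat.totient_prime_pow_succ Nat.prime_two,
      Nat.add_one_sub_one, mul_one] at hcard
    exact Nat.eq_of_mul_eq_mul_left (pow_pos two_pos j) (hcard.trans (pow_succ 2 j))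
  simpa [hindex] using (Subgroup.zpowers u).natCard_pow_eq_one_le_index_mul hm

theorem natCard_pow_eq_one_le_of_odd {m : ℕ} (hm : m ≠ 0) {n : ℕ} (hn : Odd n) :
    Nat.card {x : ZMod n // x ^ m = 1} ≤ m ^ n.primeFactors.card := by
  induction n using Nat.recOnPosPrimePosCoprime with
  | prime_pow p k hp hk =>
    have hp2 : p ≠ 2 := by
      rintro rfl
      exact Nat.not_odd_iff_even.mpr ((Nat.even_pow' hk.ne').mpr even_two) hn
    rw [Nat.primeFactors_prime_pow hk.ne' hp, Finset.card_singleton, pow_one]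
    exact natCard_pow_eq_one_prime_pow_le hp hp2 k hm
  | zero => exact absurd hn Nat.not_odd_zero
  | one =>
    rw [Nat.primeFactors_one, Finset.card_empty, pow_zero]
    exact Finite.card_le_one_iff_subsingleton.mpr inferInstance
  | coprime a b _ _ hab iha ihb =>
    obtain ⟨ha, hb⟩ := Nat.odd_mul.mp hn
    rw [natCard_pow_eq_one_mul hab, hab.primeFactors_mul,
      Finset.card_union_of_disjoint hab.disjoint_primeFactors, pow_add]
    exact Nat.mul_le_mul (iha ha) (ihb hb)

theorem card_filter_range_pow_mod_eq_natCard {n : ℕ} (hn : n ≠ 0) (m : ℕ) :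
    ((Finset.range n).filter (fun x => x ^ m % n = 1 % n)).card =
      Nat.card {x : ZMod n // x ^ m = 1} := by
  have : NeZero n := ⟨hn⟩
  have hsol (x : ℕ) : x ^ m % n = 1 % n ↔ (x : ZMod n) ^ m = 1 := by
    rw [← natCast_eq_natCast_iff', Nat.cast_pow, Nat.cast_one]
  rw [Nat.card_eq_fintype_card, Fintype.card_subtype]
  refine Finset.card_bij' (fun x _ => (x : ZMod n)) (fun x _ => x.val) ?_ ?_ ?_ ?_
  · intro x hx
    simpa [hsol] using (Finset.mem_filter.mp hx).2
  · intro x hx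
    refine Finset.mem_filter.mpr ⟨Finset.mem_range.mpr (val_lt x), (hsol _).mpr ?_⟩
    rw [natCast_zmod_val]
    exact (Finset.mem_filter.mp hx).2
  · intro x hx
    exact val_cast_of_lt (Finset.mem_range.mp (Finset.mem_filter.mp hx).1)
  · intro x _
    exact natCast_zmod_val x

end ZMod

/-- The number of solutions `x` mod `n` of `x^m ≡ 1 (mod n)` is at most `2·m^ω(n)`. -/
theorem stmt_0 (n m : ℕ) (hn : 1 ≤ n) (hm : 1 ≤ m) :
    ((Finset.range n).filter (fun x => x ^ m % n = 1 % n)).card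
      ≤ 2 * m ^ n.primeFactors.card := by
  have hn0 : n ≠ 0 := Nat.one_le_iff_ne_zero.mp hn
  have hm0 : m ≠ 0 := Nat.one_le_iff_ne_zero.mp hm
  rw [ZMod.card_filter_range_pow_mod_eq_natCard hn0]
  by_cases hodd : Odd n
  · exact (ZMod.natCard_pow_eq_one_le_of_odd hm0 hodd).trans (Nat.le_mul_of_pos_left _ two_pos)
  obtain ⟨k, n', hn', rfl⟩ := Nat.exists_eq_two_pow_mul_odd hn0
  have hk : k ≠ 0 := by
    rintro rfl
    exact hodd (by simpa using hn')
  have hcop : Nat.Coprime (2 ^ k) n' := (Nat.coprime_two_left.mpr hn').pow_left k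
  rw [ZMod.natCard_pow_eq_one_mul hcop, hcop.primeFactors_mul,
    Finset.card_union_of_disjoint hcop.disjoint_primeFactors,
    Nat.primeFactors_prime_pow hk Nat.prime_two, Finset.card_singleton, pow_add, pow_one,
    ← mul_assoc]
  exact Nat.mul_le_mul (ZMod.natCard_pow_eq_one_two_pow_le k hm0)
    (ZMod.natCard_pow_eq_one_le_of_odd hm0 hn')
end

section
/- For any natural number n ≥ 1 and any m ≥ 1, the number of solutions x modulo n of the congruence x^m ≡ -1 (mod n) is at most 2·m^ω(n), where ω(n) is the number of distinct prime divisors of n. -/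
/-!
By the Chinese remainder theorem the count is multiplicative over the prime-power factors `p ^ k`
of `n`. Every solution of `x ^ m = -1` is a unit, and the solutions form a coset of the `m`-torsion
of `(ZMod (p ^ k))ˣ`. For odd `p` this group is cyclic, so its `m`-torsion has at most `m` elements.
For `p = 2` there are at most two solutions: trivially if `k ≤ 1`, none if `m` is even and `k ≥ 2`
(as `-1` is not a square mod `4`), and exactly one if `m` is odd (the units form a `2`-group).
-/

open Finset

theorem card_pow_eq_le_card_pow_eq_one {G : Type*} [CommGroup G] [Fintype G] [DecidableEq G]
    (m : ℕ) (a : G) : #{x : G | x ^ m = a} ≤ #{x : G | x ^ m = 1} := by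
  rcases (univ.filter fun x : G => x ^ m = a).eq_empty_or_nonempty with hempty | ⟨x₀, hx₀⟩
  · simp [hempty]
  refine card_le_card_of_injOn (· / x₀) (fun x hx => ?_) div_left_injective.injOn
  simp only [coe_filter, mem_filter, mem_univ, true_and, Set.mem_ofPred_eq] at hx hx₀ ⊢
  rw [div_pow, hx, hx₀, div_self']

theorem card_pow_eq_one_le_one_of_coprime {G : Type*} [Group G] [Fintype G] [DecidableEq G]
    {m : ℕ} (h : (Nat.card G).Coprime m) : #{x : G | x ^ m = 1} ≤ 1 := by
  refine card_le_one.mpr fun x hx y hy => (powCoprime h).injective ?_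
  simp only [mem_filter, mem_univ, true_and] at hx hy
  simp [powCoprime, hx, hy]

theorem card_pow_eq_neg_one_le_card_units {R : Type*} [Monoid R] [HasDistribNeg R] [Fintype R]
    [DecidableEq R] {m : ℕ} (hm : m ≠ 0) :
    #{x : R | x ^ m = -1} ≤ #{u : Rˣ | u ^ m = -1} := by
  calc #{x : R | x ^ m = -1} ≤ #((univ.filter fun u : Rˣ => u ^ m = -1).image Units.val) := by
        refine card_le_card fun x hx => ?_
        simp only [mem_filter, mem_univ, true_and] at hx
        have hunit : IsUnit x :=
          IsUnit.of_pow_eq_one (n := 2 * m) (by rw [pow_mul', hx, neg_one_sq]) (by omega)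
        refine mem_image.mpr ⟨hunit.unit, ?_, rfl⟩
        simp only [mem_filter, mem_univ, true_and]
        ext
        simp [hx]
    _ ≤ _ := card_image_le

theorem RingEquiv.card_pow_eq_neg_one_eq {R S : Type*} [Ring R] [Ring S] [Fintype R] [Fintype S]
    [DecidableEq R] [DecidableEq S] (e : R ≃+* S) (m : ℕ) :
    #{x : R | x ^ m = -1} = #{y : S | y ^ m = -1} :=
  card_equiv e.toEquiv fun x => by simp [← e.injective.eq_iff (a := x ^ m)]

theorem Pi.card_pow_eq_neg_one_eq_prod {ι : Type*} [Fintype ι] [DecidableEq ι] {R : ι → Type*}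
    [∀ i, Ring (R i)] [∀ i, Fintype (R i)] [∀ i, DecidableEq (R i)] (m : ℕ) :
    #{x : ∀ i, R i | x ^ m = -1} = ∏ i, #{x : R i | x ^ m = -1} := by
  rw [← Fintype.card_piFinset]
  congr 1
  ext x
  simp [funext_iff]

theorem ZMod.card_range_filter_natCast (n : ℕ) [NeZero n] (P : ZMod n → Prop) [DecidablePred P] :
    #((range n).filter fun x : ℕ => P x) = #{x : ZMod n | P x} :=
  card_nbij' Nat.cast ZMod.val (fun x hx => by simpa using (mem_filter.mp hx).2)
    (fun x hx => by simpa [ZMod.val_lt] using hx)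
    (fun x hx => ZMod.val_cast_of_lt (mem_range.mp (mem_filter.mp hx).1))
    (fun x _ => ZMod.natCast_zmod_val x)

theorem ZMod.card_pow_eq_neg_one_prime_pow_le_of_ne_two {p : ℕ} [Fact p.Prime] (hp2 : p ≠ 2)
    (k : ℕ) {m : ℕ} (hm : m ≠ 0) : #{x : ZMod (p ^ k) | x ^ m = -1} ≤ m := by
  have := ZMod.isCyclic_units_of_prime_pow p Fact.out hp2 k
  calc #{x : ZMod (p ^ k) | x ^ m = -1} ≤ #{u : (ZMod (p ^ k))ˣ | u ^ m = -1} :=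
        card_pow_eq_neg_one_le_card_units hm
    _ ≤ #{u : (ZMod (p ^ k))ˣ | u ^ m = 1} := card_pow_eq_le_card_pow_eq_one m _
    _ ≤ m := IsCyclic.card_pow_eq_one_le (Nat.pos_of_ne_zero hm)

theorem ZMod.pow_ne_neg_one_of_even {k m : ℕ} (hk : 2 ≤ k) (hm : Even m) (x : ZMod (2 ^ k)) :
    x ^ m ≠ -1 := by
  obtain ⟨j, rfl⟩ := hm
  intro hx
  have h4 : 4 ∣ 2 ^ k := pow_dvd_pow 2 hk
  have : (ZMod.castHom h4 (ZMod 4) (x ^ j)) ^ 2 = -1 := by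
    rw [← map_pow, ← pow_mul, mul_two, hx, map_neg, map_one]
  revert this
  generalize ZMod.castHom h4 (ZMod 4) (x ^ j) = y
  decide +revert

theorem ZMod.card_pow_eq_neg_one_two_pow_le (k : ℕ) {m : ℕ} (hm : m ≠ 0) :
    #{x : ZMod (2 ^ k) | x ^ m = -1} ≤ 2 := by
  obtain hk | hk := le_or_gt k 1
  · calc #{x : ZMod (2 ^ k) | x ^ m = -1} ≤ 2 ^ k := (card_filter_le _ _).trans (by simp)
      _ ≤ 2 := by simpa using Nat.pow_le_pow_right two_pos hk
  obtain hm2 | hm2 := m.even_or_odd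
  · simp [filter_false_of_mem fun x _ => ZMod.pow_ne_neg_one_of_even hk hm2 x]
  · obtain ⟨k, rfl⟩ : ∃ j, k = j + 1 := ⟨k - 1, by omega⟩
    have hcop : (Nat.card (ZMod (2 ^ (k + 1)))ˣ).Coprime m := by
      rw [Nat.card_eq_fintype_card, ZMod.card_units_eq_totient,
        Nat.totient_prime_pow_succ Nat.prime_two]
      simpa using (Nat.coprime_two_left.mpr hm2).pow_left k
    calc #{x : ZMod (2 ^ (k + 1)) | x ^ m = -1} ≤ #{u : (ZMod (2 ^ (k + 1)))ˣ | u ^ m = -1} :=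
          card_pow_eq_neg_one_le_card_units hm
      _ ≤ #{u : (ZMod (2 ^ (k + 1)))ˣ | u ^ m = 1} := card_pow_eq_le_card_pow_eq_one m _
      _ ≤ 2 := (card_pow_eq_one_le_one_of_coprime hcop).trans one_le_two

theorem ZMod.card_pow_eq_neg_one_prime_pow_le {p : ℕ} [Fact p.Prime] (k : ℕ) {m : ℕ}
    (hm : m ≠ 0) : #{x : ZMod (p ^ k) | x ^ m = -1} ≤ if p = 2 then 2 else m := by
  split_ifs with hp2
  · subst hp2
    exact ZMod.card_pow_eq_neg_one_two_pow_le k hm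
  · exact ZMod.card_pow_eq_neg_one_prime_pow_le_of_ne_two hp2 k hm

theorem prod_ite_eq_two_le_two_mul_pow_card (s : Finset ℕ) {m : ℕ} (hm : m ≠ 0) :
    ∏ p ∈ s, (if p = 2 then 2 else m) ≤ 2 * m ^ #s := by
  rw [prod_ite (p := (· = 2)) (fun _ => 2) (fun _ => m), prod_const, prod_const]
  gcongr
  · calc 2 ^ #{p ∈ s | p = 2} ≤ 2 ^ 1 :=
          Nat.pow_le_pow_right two_pos (card_le_one.mpr fun a ha b hb => by simp_all)
      _ = 2 := rfl
  · omega
  · exact filter_subset _ s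

/-- The number of solutions `x` mod `n` of `x^m ≡ -1 (mod n)` is at most `2·m^ω(n)`. -/
theorem stmt_1 (n m : ℕ) (hn : 1 ≤ n) (hm : 1 ≤ m) :
    ((Finset.range n).filter (fun x : ℕ => ((x : ZMod n)) ^ m = -1)).card
      ≤ 2 * m ^ n.primeFactors.card := by
  have hn0 : n ≠ 0 := by omega
  have : NeZero n := ⟨hn0⟩
  have (p : n.primeFactors) : Fact (p : ℕ).Prime := ⟨Nat.prime_of_mem_primeFactors p.2⟩
  rw [ZMod.card_range_filter_natCast n (· ^ m = -1),
    (ZMod.equivPi (n := n) hn0).card_pow_eq_neg_one_eq, Pi.card_pow_eq_neg_one_eq_prod]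
  calc ∏ p : n.primeFactors, #{x : ZMod ((p : ℕ) ^ n.factorization p) | x ^ m = -1}
      ≤ ∏ p : n.primeFactors, if (p : ℕ) = 2 then 2 else m :=
        prod_le_prod' fun p _ => ZMod.card_pow_eq_neg_one_prime_pow_le _ (by omega)
    _ = ∏ p ∈ n.primeFactors, if p = 2 then 2 else m :=
        prod_coe_sort _ fun p => if p = 2 then 2 else m
    _ ≤ 2 * m ^ n.primeFactors.card := prod_ite_eq_two_le_two_mul_pow_card _ (by omega)
end

section
/- For n ≥ 2, the sum over primes q > n and integers m ≥ 2 of 1/(m·q^m) is O(1/(n·log n)). -/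
/-!
For `q, m ≥ 2` we have `1 / (m q^m) ≤ 4 q⁻² 2⁻ᵐ`, so the double sum is at most
`8 ∑_{q > n prime} q⁻²`. By Chebyshev's bound `θ(x) ≤ x log 4`, a dyadic block `(M, 2M]` with
`M ≥ n` contains at most `2M log 4 / log n` primes and so contributes at most
`2 log 4 / (M log n)` to this sum; adding up the blocks `M = 2ʲ n` gives `4 log 4 / (n log n)`.
-/

open Finset Real

theorem sum_Ioc_two_pow_mul_le (f : ℕ → ℝ) (n : ℕ) (c : ℝ)
    (h : ∀ M, n ≤ M → ∑ k ∈ Ioc M (2 * M), f k ≤ c / M) (J : ℕ) :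
    ∑ k ∈ Ioc n (2 ^ J * n), f k ≤ 2 * c / n - 2 * c / (2 ^ J * n) := by
  induction J with
  | zero => simp
  | succ J ih =>
    have hle : n ≤ 2 ^ J * n := Nat.le_mul_of_pos_left n (Nat.two_pow_pos J)
    rw [pow_succ', mul_assoc, ← sum_Ioc_consecutive _ hle (by omega)]
    calc _ ≤ (2 * c / n - 2 * c / (2 ^ J * n)) + c / (2 ^ J * n : ℕ) := add_le_add ih (h _ hle)
      _ = 2 * c / n - 2 * c / (2 ^ (J + 1) * n) := by push_cast; ring

theorem tsum_le_of_sum_Ioc_two_mul_le {f : ℕ → ℝ} {n : ℕ} {c : ℝ} (hn : 0 < n) (hc : 0 ≤ c)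
    (hf : 0 ≤ f) (hf_le : ∀ k ≤ n, f k = 0)
    (h : ∀ M, n ≤ M → ∑ k ∈ Ioc M (2 * M), f k ≤ c / M) :
    ∑' k, f k ≤ 2 * c / n := by
  refine Real.tsum_le_of_sum_range_le hf fun N => ?_
  have hsub : {k ∈ range N | n < k} ⊆ Ioc n (2 ^ N * n) := fun k hk => by
    simp only [mem_filter, mem_range, mem_Ioc] at hk ⊢
    have := Nat.lt_two_pow_self (n := N)
    exact ⟨hk.2, by nlinarith⟩
  calc ∑ k ∈ range N, f k = ∑ k ∈ range N with n < k, f k :=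
        (sum_filter_of_ne fun k _ hk => by contrapose! hk; exact hf_le k hk).symm
    _ ≤ ∑ k ∈ Ioc n (2 ^ N * n), f k := sum_le_sum_of_subset_of_nonneg hsub fun k _ _ => hf k
    _ ≤ 2 * c / n - 2 * c / (2 ^ N * n) := sum_Ioc_two_pow_mul_le f n c h N
    _ ≤ 2 * c / n := sub_le_self _ (by positivity)

theorem card_primes_Ioc_mul_log_le (M : ℕ) :
    (#{p ∈ Ioc M (2 * M) | p.Prime} : ℝ) * log M ≤ log 4 * (2 * M) := by
  set s := {p ∈ Ioc M (2 * M) | p.Prime}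
  have hs : s ⊆ Nat.primesLE (2 * M) := fun p hp => by
    simp only [s, mem_filter, mem_Ioc] at hp
    exact Nat.mem_primesLE.2 ⟨hp.1.2, hp.2⟩
  calc (#s : ℝ) * log M = #s • log M := (nsmul_eq_mul _ _).symm
    _ ≤ ∑ p ∈ s, log p := card_nsmul_le_sum _ _ _ fun p hp => by
        simp only [s, mem_filter, mem_Ioc] at hp
        rcases M.eq_zero_or_pos with rfl | hM
        · simpa using log_natCast_nonneg p
        · exact log_le_log (by positivity) (by exact_mod_cast hp.1.1.le)
    _ ≤ ∑ p ∈ Nat.primesLE (2 * M), log p :=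
        sum_le_sum_of_subset_of_nonneg hs fun p _ _ => log_natCast_nonneg p
    _ = Chebyshev.theta (2 * M : ℕ) := (Chebyshev.theta_eq_sum_primesLE_log _).symm
    _ ≤ log 4 * (2 * M) := by
        simpa using Chebyshev.theta_le_log4_mul_x (Nat.cast_nonneg (α := ℝ) (2 * M))

theorem sum_primes_Ioc_inv_sq_le {n M : ℕ} (hn : 1 < n) (hnM : n ≤ M) :
    ∑ p ∈ Ioc M (2 * M) with p.Prime, ((p : ℝ) ^ 2)⁻¹ ≤ 2 * log 4 / log n / M := by
  set s := {p ∈ Ioc M (2 * M) | p.Prime}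
  have hM : (0 : ℝ) < M := by exact_mod_cast (by omega : 0 < M)
  have hlog : 0 < log n := log_pos (by exact_mod_cast hn)
  have hcard : (#s : ℝ) * log n ≤ log 4 * (2 * M) :=
    calc (#s : ℝ) * log n ≤ #s * log M := by gcongr
      _ ≤ log 4 * (2 * M) := card_primes_Ioc_mul_log_le M
  calc ∑ p ∈ s, ((p : ℝ) ^ 2)⁻¹ ≤ #s • ((M : ℝ) ^ 2)⁻¹ := sum_le_card_nsmul _ _ _ fun p hp => by
        simp only [s, mem_filter, mem_Ioc] at hp
        have : (M : ℝ) ≤ p := by exact_mod_cast hp.1.1.le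
        gcongr
    _ = #s * log n / (log n * M ^ 2) := by rw [nsmul_eq_mul]; field_simp
    _ ≤ log 4 * (2 * M) / (log n * M ^ 2) := by gcongr
    _ = 2 * log 4 / log n / M := by field_simp

theorem tsum_primes_gt_inv_sq_le {n : ℕ} (hn : 1 < n) :
    ∑' q : ℕ, (if q.Prime ∧ n < q then ((q : ℝ) ^ 2)⁻¹ else 0) ≤ 4 * log 4 / (n * log n) := by
  have hblock (M : ℕ) (hM : n ≤ M) :
      ∑ k ∈ Ioc M (2 * M), (if k.Prime ∧ n < k then ((k : ℝ) ^ 2)⁻¹ else 0)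
        ≤ 2 * log 4 / log n / M := by
    calc _ = ∑ k ∈ Ioc M (2 * M) with k.Prime, ((k : ℝ) ^ 2)⁻¹ := by
          rw [sum_filter]
          refine sum_congr rfl fun k hk => ?_
          have : n < k := hM.trans_lt (mem_Ioc.1 hk).1
          simp only [this, and_true]
      _ ≤ 2 * log 4 / log n / M := sum_primes_Ioc_inv_sq_le hn hM
  calc _ ≤ 2 * (2 * log 4 / log n) / n :=
        tsum_le_of_sum_Ioc_two_mul_le (by omega) (by positivity) (fun q => by positivity)
          (fun k hk => if_neg fun h => by omega) hblock
    _ = 4 * log 4 / (n * log n) := by ring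

theorem one_div_mul_pow_le {q : ℝ} (hq : 2 ≤ q) {m : ℕ} (hm : 2 ≤ m) :
    1 / (m * q ^ m) ≤ (q ^ 2)⁻¹ * (4 * 2⁻¹ ^ m) := by
  obtain ⟨k, rfl⟩ := Nat.exists_eq_add_of_le' hm
  have hm1 : (1 : ℝ) ≤ (k + 2 : ℕ) := by exact_mod_cast (by omega : 1 ≤ k + 2)
  calc 1 / ((k + 2 : ℕ) * q ^ (k + 2)) ≤ 1 / (1 * q ^ (k + 2)) := by gcongr
    _ = (q ^ 2)⁻¹ * (q ^ k)⁻¹ := by rw [one_mul, one_div, pow_add, mul_inv, mul_comm]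
    _ ≤ (q ^ 2)⁻¹ * (2 ^ k)⁻¹ := by gcongr
    _ = (q ^ 2)⁻¹ * (4 * 2⁻¹ ^ (k + 2)) := by rw [pow_add, inv_pow]; ring

/-- For `n ≥ 2`, `∑_{q prime, q > n} ∑_{m ≥ 2} 1/(m q^m) = O(1/(n log n))`. -/
theorem stmt_4 : ∃ C : ℝ, 0 < C ∧ ∀ n : ℕ, 2 ≤ n →
    (∑' p : ℕ × ℕ, if p.1.Prime ∧ n < p.1 ∧ 2 ≤ p.2
      then 1 / ((p.2 : ℝ) * (p.1 : ℝ) ^ p.2) else 0)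
    ≤ C / (n * Real.log n) := by
  refine ⟨32 * log 4, by positivity, fun n hn => ?_⟩
  set a : ℕ → ℝ := fun q => if q.Prime ∧ n < q then ((q : ℝ) ^ 2)⁻¹ else 0
  set b : ℕ → ℝ := fun m => 4 * 2⁻¹ ^ m
  have ha : 0 ≤ a := fun q => by positivity
  have hb : 0 ≤ b := fun m => by positivity
  have ha_sum : Summable a := (Real.summable_nat_pow_inv.2 one_lt_two).of_nonneg_of_le ha
    fun q => by dsimp only [a]; split_ifs <;> simp
  have hb_sum : Summable b := (summable_geometric_of_lt_one (by norm_num) (by norm_num)).mul_left 4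
  have hab : Summable fun p : ℕ × ℕ => a p.1 * b p.2 := ha_sum.mul_of_nonneg hb_sum ha hb
  have hdom (p : ℕ × ℕ) : (if p.1.Prime ∧ n < p.1 ∧ 2 ≤ p.2
      then 1 / ((p.2 : ℝ) * (p.1 : ℝ) ^ p.2) else 0) ≤ a p.1 * b p.2 := by
    split_ifs with h
    · simpa [a, b, h.1, h.2.1] using one_div_mul_pow_le (by exact_mod_cast h.1.two_le) h.2.2
    · exact mul_nonneg (ha _) (hb _)
  calc _ ≤ ∑' p : ℕ × ℕ, a p.1 * b p.2 :=
        (hab.of_nonneg_of_le (fun p => by split_ifs <;> positivity) hdom).tsum_le_tsum hdom hab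
    _ = (∑' q, a q) * ∑' m, b m := (ha_sum.tsum_mul_tsum hb_sum hab).symm
    _ ≤ 4 * log 4 / (n * log n) * 8 := by
        rw [tsum_mul_left, tsum_geometric_inv_two]
        gcongr
        · exact tsum_primes_gt_inv_sq_le hn
        · norm_num
    _ = 32 * log 4 / (n * Real.log n) := by ring
end

section
/- There exists a constant c > 0 such that the sum over k ≤ T of ∏_{p | k} (1 - 1/p)^{-1} is asymptotic to c·T as T → ∞. -/
/-!
Each Euler factor is `(1 - 1/p)⁻¹ = 1 + 1/(p - 1)`, so expanding the product gives
`∏_{p ∣ k} (1 - 1/p)⁻¹ = ∑_{d ∣ k} μ(d)² / φ(d)`. Exchanging the order of summation,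
`∑_{k ≤ T} ∑_{d ∣ k} h(d) = ∑_{d ≤ T} ⌊T/d⌋ h(d)`, and after division by `T` each term tends to
`h(d)/d` while being dominated by `|h(d)|/d`. For `h = μ²/φ` the majorant is summable because
`d ≤ 2 φ(d)²` for squarefree `d`, so Tannery's theorem gives the limit `c = ∑ μ(d)² / (d φ(d)) ≥ 1`.
-/
open Finset Filter Topology Asymptotics
open scoped Nat

namespace Nat

theorem totient_prod_of_prime {s : Finset ℕ} (hs : ∀ p ∈ s, p.Prime) :
    φ (∏ p ∈ s, p) = ∏ p ∈ s, (p - 1) := by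
  have hpos : 0 < ∏ p ∈ s, p := prod_pos fun p hp => (hs p hp).pos
  have h := totient_mul_prod_primeFactors (∏ p ∈ s, p)
  rw [primeFactors_prod hs, mul_comm (φ _)] at h
  exact Nat.eq_of_mul_eq_mul_left hpos h

theorem prod_le_two_mul_prod_sub_one_sq {s : Finset ℕ} (hs : ∀ p ∈ s, p.Prime) :
    ∏ p ∈ s, p ≤ 2 * (∏ p ∈ s, (p - 1)) ^ 2 := by
  have hsplit : ∏ p ∈ s, p ≤ 2 * ∏ p ∈ s.erase 2, p := by
    by_cases h2 : 2 ∈ s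
    · exact (mul_prod_erase s (fun p => p) h2).ge
    · rw [erase_eq_of_notMem h2]
      omega
  calc ∏ p ∈ s, p ≤ 2 * ∏ p ∈ s.erase 2, p := hsplit
    _ ≤ 2 * ∏ p ∈ s.erase 2, (p - 1) ^ 2 := by
      gcongr with p hp
      have h3 : 3 ≤ p := (hs p (mem_of_mem_erase hp)).two_le.lt_of_ne' (ne_of_mem_erase hp)
      obtain ⟨q, rfl⟩ : ∃ q, p = q + 1 := ⟨p - 1, by omega⟩
      simp only [Nat.add_sub_cancel]
      nlinarith
    _ ≤ 2 * ∏ p ∈ s, (p - 1) ^ 2 := by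
      gcongr 2 * ?_
      refine prod_le_prod_of_subset_of_one_le' (erase_subset 2 s) fun p hp _ => ?_
      have := (hs p hp).two_le
      exact Nat.one_le_pow _ _ (by omega)
    _ = 2 * (∏ p ∈ s, (p - 1)) ^ 2 := by rw [prod_pow]

theorem le_two_mul_totient_sq {d : ℕ} (hd : Squarefree d) : d ≤ 2 * φ d ^ 2 := by
  have hs : ∀ p ∈ d.primeFactors, p.Prime := fun p hp => prime_of_mem_primeFactors hp
  have h := prod_le_two_mul_prod_sub_one_sq hs
  rwa [← totient_prod_of_prime hs, prod_primeFactors_of_squarefree hd] at h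

end Nat

theorem sum_Icc_sum_divisors {M : Type*} [AddCommMonoid M] (f : ℕ → M) (T : ℕ) :
    ∑ k ∈ Icc 1 T, ∑ d ∈ k.divisors, f d = ∑ d ∈ Icc 1 T, (T / d) • f d := by
  rw [sum_comm' (t' := Icc 1 T) (s' := fun d => {k ∈ Icc 1 T | d ∣ k})]
  · refine sum_congr rfl fun d _ => ?_
    rw [sum_const, ← Nat.Ioc_filter_dvd_card_eq_div]
    rfl
  · intro k d
    simp only [mem_Icc, Nat.mem_divisors, mem_filter]
    constructor
    · rintro ⟨hk, hdk, -⟩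
      have := Nat.le_of_dvd (by omega) hdk
      have := Nat.pos_of_dvd_of_pos hdk (by omega)
      omega
    · rintro ⟨⟨hk, hdk⟩, -⟩
      exact ⟨hk, hdk, by omega⟩

theorem natCast_div_div_le (T d : ℕ) : ((T / d : ℕ) : ℝ) / T ≤ (d : ℝ)⁻¹ := by
  rcases T.eq_zero_or_pos with rfl | hT
  · simp
  rw [div_le_iff₀ (by exact_mod_cast hT), ← div_eq_inv_mul]
  exact Nat.cast_div_le

theorem tendsto_natCast_div_div_atTop (d : ℕ) :
    Tendsto (fun T : ℕ => ((T / d : ℕ) : ℝ) / T) atTop (𝓝 (d : ℝ)⁻¹) := by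
  have hlower : Tendsto (fun T : ℕ => (d : ℝ)⁻¹ - (T : ℝ)⁻¹) atTop (𝓝 (d : ℝ)⁻¹) := by
    simpa using tendsto_const_nhds.sub (tendsto_inv_atTop_nhds_zero_nat (𝕜 := ℝ))
  refine tendsto_of_tendsto_of_tendsto_of_le_of_le' hlower tendsto_const_nhds ?_
    (Eventually.of_forall fun T => natCast_div_div_le T d)
  filter_upwards [eventually_gt_atTop 0] with T hT
  have hT' : (T : ℝ) ≠ 0 := by positivity
  have hlower_eq : (d : ℝ)⁻¹ - (T : ℝ)⁻¹ = ((T : ℝ) / d - 1) / T := by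
    rw [sub_div, div_div_cancel_left' hT', one_div]
  rw [hlower_eq, ← Nat.floor_div_eq_div (K := ℝ)]
  gcongr
  exact (Nat.sub_one_lt_floor _).le

theorem tendsto_sum_sum_divisors_div_atTop {h : ℕ → ℝ} (hh : Summable fun d => ‖h d‖ / d) :
    Tendsto (fun T : ℕ => (∑ k ∈ Icc 1 T, ∑ d ∈ k.divisors, h d) / T) atTop
      (𝓝 (∑' d, h d / d)) := by
  have hrepr (T : ℕ) : (∑ k ∈ Icc 1 T, ∑ d ∈ k.divisors, h d) / T
      = ∑' d, ((T / d : ℕ) : ℝ) / T * h d := by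
    rw [sum_Icc_sum_divisors, sum_div, tsum_eq_sum (s := Icc 1 T)]
    · refine sum_congr rfl fun d _ => ?_
      rw [nsmul_eq_mul]
      ring
    · intro d hd
      obtain rfl | hd : d = 0 ∨ T < d := by rw [mem_Icc] at hd; omega
      · simp
      · simp [Nat.div_eq_of_lt hd]
  simp only [hrepr]
  have hbound (T d : ℕ) : ‖((T / d : ℕ) : ℝ) / T * h d‖ ≤ ‖h d‖ / d := by
    rw [norm_mul, Real.norm_of_nonneg (by positivity), div_eq_mul_inv ‖h d‖, mul_comm ‖h d‖]
    exact mul_le_mul_of_nonneg_right (natCast_div_div_le T d) (norm_nonneg (h d))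
  simpa only [inv_mul_eq_div] using tendsto_tsum_of_dominated_convergence hh
    (fun d => (tendsto_natCast_div_div_atTop d).mul_const (h d)) (.of_forall hbound)

noncomputable def sqfreeInvTotient (d : ℕ) : ℝ := if Squarefree d then (φ d : ℝ)⁻¹ else 0

theorem sqfreeInvTotient_nonneg (d : ℕ) : 0 ≤ sqfreeInvTotient d := by
  unfold sqfreeInvTotient
  split_ifs <;> positivity

theorem prod_primeFactors_inv_one_sub_inv_eq_sum_divisors {k : ℕ} (hk : k ≠ 0) :
    ∏ p ∈ k.primeFactors, ((1 : ℝ) - 1 / p)⁻¹ = ∑ d ∈ k.divisors, sqfreeInvTotient d := by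
  have hfactor : ∀ p ∈ k.primeFactors, ((1 : ℝ) - 1 / p)⁻¹ = 1 + ((p : ℝ) - 1)⁻¹ := by
    intro p hp
    have hp1 : (1 : ℝ) < p := by exact_mod_cast (Nat.prime_of_mem_primeFactors hp).one_lt
    have : (p : ℝ) - 1 ≠ 0 := by linarith
    field_simp
    ring
  rw [prod_congr rfl hfactor, prod_one_add]
  simp only [sqfreeInvTotient]
  rw [← sum_filter, Nat.sum_divisors_filter_squarefree hk, Nat.factors_eq]
  refine sum_congr rfl fun t ht => ?_
  have hprime : ∀ p ∈ t, p.Prime := fun p hp =>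
    Nat.prime_of_mem_primeFactors (mem_powerset.1 ht hp)
  rw [show t.val.prod = ∏ p ∈ t, p from prod_val t, Nat.totient_prod_of_prime hprime,
    Nat.cast_prod, ← prod_inv_distrib]
  refine prod_congr rfl fun p hp => ?_
  rw [Nat.cast_sub (hprime p hp).one_le, Nat.cast_one]

theorem sqfreeInvTotient_div_le (d : ℕ) :
    sqfreeInvTotient d / d ≤ 2 / (d : ℝ) ^ ((3 : ℝ) / 2) := by
  unfold sqfreeInvTotient
  split_ifs with hd
  · have hd0 : (0 : ℝ) < d := by exact_mod_cast hd.ne_zero.bot_lt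
    have hφ : (0 : ℝ) < φ d := by exact_mod_cast Nat.totient_pos.2 hd.ne_zero.bot_lt
    have hsqrt : √(d : ℝ) ≤ 2 * φ d := by
      have : (d : ℝ) ≤ 2 * (φ d : ℝ) ^ 2 := by exact_mod_cast Nat.le_two_mul_totient_sq hd
      exact Real.sqrt_le_iff.2 ⟨by positivity, by nlinarith⟩
    rw [show (3 : ℝ) / 2 = 1 + 1 / 2 by norm_num, Real.rpow_add hd0, Real.rpow_one,
      ← Real.sqrt_eq_rpow, ← one_div, div_div, div_le_div_iff₀ (by positivity) (by positivity)]
    nlinarith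
  · rw [zero_div]
    positivity

theorem summable_sqfreeInvTotient_div : Summable fun d => sqfreeInvTotient d / d :=
  .of_nonneg_of_le (fun d => div_nonneg (sqfreeInvTotient_nonneg d) d.cast_nonneg)
    (fun d => (sqfreeInvTotient_div_le d).trans_eq (div_eq_mul_inv _ _))
    ((Real.summable_nat_rpow_inv.2 (by norm_num)).mul_left 2)

theorem isEquivalent_mul_natCast_of_tendsto_div {u : ℕ → ℝ} {c : ℝ} (hc : c ≠ 0)
    (h : Tendsto (fun T : ℕ => u T / T) atTop (𝓝 c)) : u ~[atTop] fun T : ℕ => c * T := by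
  refine isEquivalent_of_tendsto_one ?_
  rw [← div_self hc]
  refine (h.div_const c).congr fun T => ?_
  rw [Pi.div_apply, div_div, mul_comm]

/-- There is `c > 0` with `∑_{k ≤ T} ∏_{p | k} (1 - 1/p)⁻¹ ∼ c T` as `T → ∞`. -/
theorem stmt_6 : ∃ c : ℝ, 0 < c ∧
    Asymptotics.IsEquivalent Filter.atTop
      (fun T : ℕ => ∑ k ∈ Finset.Icc 1 T, ∏ p ∈ k.primeFactors, ((1 : ℝ) - 1 / p)⁻¹)
      (fun T : ℕ => c * T) := by
  have hc : 1 ≤ ∑' d, sqfreeInvTotient d / d := by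
    simpa [sqfreeInvTotient] using summable_sqfreeInvTotient_div.le_tsum 1
      fun d _ => div_nonneg (sqfreeInvTotient_nonneg d) d.cast_nonneg
  refine ⟨_, zero_lt_one.trans_le hc,
    isEquivalent_mul_natCast_of_tendsto_div (by linarith) ?_⟩
  have hsum (T : ℕ) : ∑ k ∈ Icc 1 T, ∏ p ∈ k.primeFactors, ((1 : ℝ) - 1 / p)⁻¹
      = ∑ k ∈ Icc 1 T, ∑ d ∈ k.divisors, sqfreeInvTotient d :=
    sum_congr rfl fun k hk =>
      prod_primeFactors_inv_one_sub_inv_eq_sum_divisors (by rw [mem_Icc] at hk; omega)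
  simp only [hsum]
  refine tendsto_sum_sum_divisors_div_atTop ?_
  simpa only [Real.norm_of_nonneg (sqfreeInvTotient_nonneg _)] using
    summable_sqfreeInvTotient_div
end

section
/- The sum over all natural numbers d ≥ 1 of μ(d)/(d·φ(2d)) equals (3/4)·∏_{p odd prime} (1 - 1/(p(p-1))). -/
/-!
The summand `f d = μ(d) / (d φ(2d))` is multiplicative, because `d ↦ φ(2d)` is, and
`|f d| ≤ d ^ (-3/2)` since `d ≤ φ(2d)²`. Its Euler product therefore converges to the sum; as `μ`
vanishes on non-squarefree numbers the local factor at `p` is `1 + f p`, which is `3/4` at `p = 2`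
and `1 - 1/(p(p-1))` at odd `p`.
-/

open ArithmeticFunction
open scoped ArithmeticFunction.Moebius

namespace Nat

theorem totient_two_mul_mul {m n : ℕ} (h : m.Coprime n) :
    φ (2 * (m * n)) = φ (2 * m) * φ (2 * n) := by
  rcases n.even_or_odd with hn | hn
  · have hm : Odd m := coprime_two_left.mp (h.coprime_dvd_right hn.two_dvd).symm
    rw [show 2 * (m * n) = m * (2 * n) by ring,
      totient_mul ((coprime_two_right.mpr hm).mul_right h), totient_two_mul_of_odd hm]
  · rw [← mul_assoc, totient_mul ((coprime_two_left.mpr hn).mul_left h),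
      totient_two_mul_of_odd hn]

theorem le_totient_two_mul_sq (n : ℕ) : n ≤ φ (2 * n) ^ 2 := by
  induction n using recOnPosPrimePosCoprime with
  | zero => simp
  | one => simp
  | coprime a b _ _ hab iha ihb =>
    rw [totient_two_mul_mul hab, mul_pow]
    exact Nat.mul_le_mul iha ihb
  | prime_pow p k hp hk =>
    obtain ⟨k, rfl⟩ : ∃ j, k = j + 1 := ⟨k - 1, by omega⟩
    rcases hp.eq_two_or_odd' with rfl | hodd
    · rw [← pow_succ', totient_prime_pow_succ prime_two]
      simpa using le_self_pow two_ne_zero (2 ^ (k + 1))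
    · have hp3 : 3 ≤ p := by
        obtain ⟨r, rfl⟩ := hodd
        have := hp.two_le
        omega
      rw [totient_two_mul_of_odd hodd.pow, totient_prime_pow_succ hp, mul_pow, pow_succ]
      exact Nat.mul_le_mul (le_self_pow two_ne_zero _)
        (by zify [hp.one_le]; nlinarith)

end Nat

theorem HasProd.update_one_of_ne_zero {α β : Type*} [CommGroupWithZero α] [TopologicalSpace α]
    [ContinuousMul α] [DecidableEq β] {f : β → α} {a : α} (hf : HasProd f a) {b : β}
    (hb : f b ≠ 0) : HasProd (Function.update f b 1) (a / f b) := by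
  convert hf.mul (hasProd_ite_eq b (f b)⁻¹) using 1
  · funext x
    rcases eq_or_ne x b with rfl | hx
    · simp [hb]
    · simp [hx]
  · rw [div_eq_mul_inv]

theorem Nat.Primes.hasProd_odd_of_hasProd {α : Type*} [CommGroupWithZero α] [TopologicalSpace α]
    [ContinuousMul α] {F : Nat.Primes → α} {a : α} (hF : HasProd F a)
    (h2 : F ⟨2, Nat.prime_two⟩ ≠ 0) :
    HasProd (fun p : {p : ℕ // p.Prime ∧ Odd p} ↦ F ⟨p, p.2.1⟩) (a / F ⟨2, Nat.prime_two⟩) := by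
  classical
  let two : Nat.Primes := ⟨2, Nat.prime_two⟩
  let g : {p : ℕ // p.Prime ∧ Odd p} → Nat.Primes := fun p ↦ ⟨p, p.2.1⟩
  have hg : g.Injective := fun p q h ↦ Subtype.ext (Subtype.mk.inj h)
  have hne (p : {p : ℕ // p.Prime ∧ Odd p}) : g p ≠ two := fun h ↦
    Nat.not_even_iff_odd.mpr p.2.2 (Subtype.mk.inj h ▸ even_two)
  have hrange (q : Nat.Primes) (hq : q ∉ Set.range g) : Function.update F two 1 q = 1 := by
    obtain rfl : q = two := by
      by_contra h
      exact hq ⟨⟨q, q.2, q.2.odd_of_ne_two fun h' ↦ h (Subtype.ext h')⟩, rfl⟩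
    exact Function.update_self ..
  convert (hg.hasProd_iff hrange).mpr (hF.update_one_of_ne_zero h2) using 1
  funext p
  exact (Function.update_of_ne (hne p) ..).symm

noncomputable def moebiusTotientTerm (d : ℕ) : ℝ := (μ d : ℝ) / (d * (2 * d).totient)

theorem moebiusTotientTerm_zero : moebiusTotientTerm 0 = 0 := by
  simp [moebiusTotientTerm]

theorem moebiusTotientTerm_one : moebiusTotientTerm 1 = 1 := by
  simp [moebiusTotientTerm]

theorem moebiusTotientTerm_mul {m n : ℕ} (h : m.Coprime n) :
    moebiusTotientTerm (m * n) = moebiusTotientTerm m * moebiusTotientTerm n := by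
  simp only [moebiusTotientTerm, isMultiplicative_moebius.map_mul_of_coprime h,
    Nat.totient_two_mul_mul h]
  push_cast
  ring

theorem norm_moebiusTotientTerm_le (d : ℕ) :
    ‖moebiusTotientTerm d‖ ≤ 1 / (d : ℝ) ^ (3 / 2 : ℝ) := by
  rcases d.eq_zero_or_pos with rfl | hd
  · simp [moebiusTotientTerm]
  have hsqrt : √(d : ℝ) ≤ (2 * d).totient :=
    (Real.sqrt_le_left (by positivity)).mpr (by exact_mod_cast Nat.le_totient_two_mul_sq d)
  have hμ : |(μ d : ℝ)| ≤ 1 := by exact_mod_cast abs_moebius_le_one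
  calc ‖moebiusTotientTerm d‖ = |(μ d : ℝ)| / (d * (2 * d).totient) := by
        rw [moebiusTotientTerm, Real.norm_eq_abs, abs_div,
          abs_of_nonneg (a := (d : ℝ) * _) (by positivity)]
    _ ≤ 1 / (d * √(d : ℝ)) := by gcongr
    _ = 1 / (d : ℝ) ^ (3 / 2 : ℝ) := by
        rw [Real.sqrt_eq_rpow, ← Real.rpow_one_add' (by positivity) (by norm_num)]
        norm_num

theorem summable_norm_moebiusTotientTerm : Summable (‖moebiusTotientTerm ·‖) :=
  (Real.summable_one_div_nat_rpow.mpr (by norm_num)).of_nonneg_of_le (fun _ ↦ norm_nonneg _)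
    norm_moebiusTotientTerm_le

theorem tsum_moebiusTotientTerm_prime_pow {p : ℕ} (hp : p.Prime) :
    ∑' e, moebiusTotientTerm (p ^ e) = 1 + moebiusTotientTerm p := by
  rw [tsum_eq_sum (s := {0, 1}), Finset.sum_pair zero_ne_one, pow_zero, pow_one,
    moebiusTotientTerm_one]
  intro e he
  simp only [Finset.mem_insert, Finset.mem_singleton, not_or] at he
  simp [moebiusTotientTerm, moebius_apply_prime_pow hp (by omega : e ≠ 0), he.2]

theorem one_add_moebiusTotientTerm_two : 1 + moebiusTotientTerm 2 = 3 / 4 := by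
  rw [moebiusTotientTerm, moebius_apply_prime Nat.prime_two, Nat.totient_two_mul_of_even even_two,
    Nat.totient_two]
  norm_num

theorem one_add_moebiusTotientTerm_of_odd {p : ℕ} (hp : p.Prime) (hodd : Odd p) :
    1 + moebiusTotientTerm p = 1 - 1 / ((p : ℝ) * ((p : ℝ) - 1)) := by
  rw [moebiusTotientTerm, moebius_apply_prime hp, Nat.totient_two_mul_of_odd hodd,
    Nat.totient_prime hp, Nat.cast_sub hp.one_le]
  push_cast
  ring

/-- `∑_{d ≥ 1} μ(d)/(d φ(2d)) = (3/4) ∏_{p odd prime} (1 - 1/(p(p-1)))`. -/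
theorem stmt_8 :
    (∑' d : ℕ, (ArithmeticFunction.moebius d : ℝ) / (d * (2 * d).totient))
      = (3 / 4) *
        ∏' p : {p : ℕ // p.Prime ∧ Odd p}, (1 - 1 / (((p : ℕ) : ℝ) * (((p : ℕ) : ℝ) - 1))) := by
  have hEuler : HasProd (fun p : Nat.Primes ↦ 1 + moebiusTotientTerm p)
      (∑' d, moebiusTotientTerm d) := by
    have hlocal (p : Nat.Primes) := tsum_moebiusTotientTerm_prime_pow p.prop
    simpa only [hlocal] using
      EulerProduct.eulerProduct_hasProd moebiusTotientTerm_one moebiusTotientTerm_mul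
        summable_norm_moebiusTotientTerm moebiusTotientTerm_zero
  have hOdd := Nat.Primes.hasProd_odd_of_hasProd hEuler
    (by rw [one_add_moebiusTotientTerm_two]; norm_num)
  rw [one_add_moebiusTotientTerm_two] at hOdd
  rw [tprod_congr fun p ↦ (one_add_moebiusTotientTerm_of_odd p.2.1 p.2.2).symm, hOdd.tprod_eq]
  change ∑' d, moebiusTotientTerm d = _
  ring
end

section
/- Let n ≥ 2 and for each m ≥ 2 let C(m) be the number of residues x mod n with x^m ≡ 1 (mod n). If C(m) ≤ 2·m^{ω(n)} for all m, then ∑_{m ≥ 2} (1/m) ∑_{q prime, q < n, q^m ≡ 1 (mod n)} 1/q^m = O(ω(n)/n). -/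
/-!
Write each prime solution as `q ^ m = n u + 1`; since `q ^ m` determines the prime `q` and the
exponent `m`, distinct pairs `(m, q)` give distinct `u ≥ 1`. Put `k = ω(n) + 1`. The term
`1 / (m q ^ m) ≤ 1 / (n m u)` is at most `u ^ (-(1 + 1/k)) / n` when `u ≤ m ^ k`, and at most
`1 / (n m ^ (k + 1))` otherwise. Summed over distinct `u`, the first bound gives
`(1 + k) / n` by comparison with `∫₁^∞ x ^ (-(1 + 1/k)) dx`. For the second, at most
`C(m) ≤ 2 m ^ ω(n)` primes share an exponent `m`, leaving `2/n · ∑_{m ≥ 2} 1/m² ≤ 2/n`.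
-/

open Finset

lemma sum_range_rpow_neg_le {s : ℝ} (hs : 0 < s) (N : ℕ) :
    ∑ i ∈ range (N + 1), ((i : ℝ) + 1) ^ (-(1 + s)) ≤ 1 + 1 / s := by
  have hanti : AntitoneOn (fun x : ℝ => x ^ (-(1 + s))) (Set.Icc 1 (1 + N)) :=
    fun x hx y _ hxy => Real.rpow_le_rpow_of_nonpos (by linarith [hx.1]) hxy (by linarith)
  have hint : ∫ x in (1 : ℝ)..1 + N, x ^ (-(1 + s)) ≤ 1 / s := by
    rw [integral_rpow (Or.inr ⟨by linarith, by simp⟩), show -(1 + s) + 1 = -s by ring,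
      Real.one_rpow, div_neg, ← neg_div, neg_sub]
    gcongr
    linarith [Real.rpow_nonneg (by positivity : (0 : ℝ) ≤ 1 + N) (-s)]
  have hsum := hanti.sum_le_integral
  simp only [Nat.cast_add, Nat.cast_one, add_comm (1 : ℝ) (_ + 1)] at hsum
  rw [sum_range_succ']
  simp only [Nat.cast_add, Nat.cast_one, Nat.cast_zero, zero_add, Real.one_rpow]
  linarith

lemma sum_rpow_neg_le {s : ℝ} (hs : 0 < s) (G : Finset ℕ) :
    ∑ v ∈ G, (v : ℝ) ^ (-(1 + s)) ≤ 1 + 1 / s := by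
  set N := G.sup id
  have hG : G ⊆ range (N + 2) :=
    (subset_range_sup_succ G).trans (range_subset_range.2 (Nat.le_succ _))
  calc ∑ v ∈ G, (v : ℝ) ^ (-(1 + s))
      ≤ ∑ v ∈ range (N + 2), (v : ℝ) ^ (-(1 + s)) :=
        sum_le_sum_of_subset_of_nonneg hG fun _ _ _ => by positivity
    _ = ∑ i ∈ range (N + 1), ((i : ℝ) + 1) ^ (-(1 + s)) := by
        -- `0 ^ x = 0` for `x ≠ 0`, so the term at `v = 0` vanishes
        rw [sum_range_succ', Nat.cast_zero, Real.zero_rpow (by linarith), add_zero]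
        push_cast; rfl
    _ ≤ 1 + 1 / s := sum_range_rpow_neg_le hs N

lemma sum_inv_sq_le_one {T : Finset ℕ} (hT : ∀ m ∈ T, 2 ≤ m) :
    ∑ m ∈ T, ((m : ℝ) ^ 2)⁻¹ ≤ 1 := by
  have hsub : T ⊆ Ioo 1 (T.sup id + 1) := fun m hm =>
    mem_Ioo.2 ⟨hT m hm, Nat.lt_succ_of_le (le_sup (f := id) hm)⟩
  calc ∑ m ∈ T, ((m : ℝ) ^ 2)⁻¹ ≤ ∑ m ∈ Ioo 1 (T.sup id + 1), ((m : ℝ) ^ 2)⁻¹ :=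
        sum_le_sum_of_subset_of_nonneg hsub fun _ _ _ => by positivity
    _ ≤ 2 / ((1 : ℕ) + 1) := sum_Ioo_inv_sq_le 1 _
    _ = 1 := by norm_num

lemma one_div_mul_le_rpow_add_one_div_pow {m u : ℝ} (hm : 0 < m) (hu : 0 < u) {k : ℕ}
    (hk : k ≠ 0) : 1 / (m * u) ≤ u ^ (-(1 + (k : ℝ)⁻¹)) + 1 / m ^ (k + 1) := by
  rcases le_or_gt u (m ^ k) with h | h
  · have hroot : u ^ (k : ℝ)⁻¹ ≤ m := by
      calc u ^ (k : ℝ)⁻¹ ≤ (m ^ k) ^ (k : ℝ)⁻¹ := by gcongr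
        _ = m := Real.pow_rpow_inv_natCast hm.le hk
    have : 1 / (m * u) ≤ u ^ (-(1 + (k : ℝ)⁻¹)) := by
      rw [Real.rpow_neg hu.le, Real.rpow_add hu, Real.rpow_one, ← one_div, mul_comm m]
      gcongr
    linarith [show 0 ≤ 1 / m ^ (k + 1) by positivity]
  · have : 1 / (m * u) ≤ 1 / m ^ (k + 1) := by
      rw [pow_succ']
      gcongr
    linarith [show 0 ≤ u ^ (-(1 + (k : ℝ)⁻¹)) by positivity]

def IsPrimeSolution (n : ℕ) (p : ℕ × ℕ) : Prop :=
  2 ≤ p.1 ∧ p.2.Prime ∧ p.2 < n ∧ p.2 ^ p.1 % n = 1 % n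

namespace IsPrimeSolution

variable {n : ℕ} {p : ℕ × ℕ}

lemma pow_eq (hn : n ≠ 1) (h : IsPrimeSolution n p) : p.2 ^ p.1 = n * (p.2 ^ p.1 / n) + 1 := by
  have := Nat.div_add_mod (p.2 ^ p.1) n
  rwa [h.2.2.2, Nat.one_mod_eq_one.2 hn, eq_comm] at this

lemma div_pos (hn : n ≠ 1) (h : IsPrimeSolution n p) : 0 < p.2 ^ p.1 / n := by
  have hpow := h.pow_eq hn
  refine Nat.pos_of_ne_zero fun h0 => ?_
  rw [h0, mul_zero, zero_add, Nat.pow_eq_one] at hpow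
  have hq := h.2.1.one_lt
  have hm := h.1
  omega

lemma injOn_div (hn : n ≠ 1) :
    Set.InjOn (fun p : ℕ × ℕ => p.2 ^ p.1 / n) {p | IsPrimeSolution n p} := by
  intro p hp p' hp' (heq : p.2 ^ p.1 / n = p'.2 ^ p'.1 / n)
  have hpow : p.2 ^ p.1 = p'.2 ^ p'.1 := by rw [hp.pow_eq hn, hp'.pow_eq hn, heq]
  obtain ⟨hq, hm⟩ := Nat.Prime.pow_inj' hp.2.1 hp'.2.1 (by have := hp.1; omega)
    (by have := hp'.1; omega) hpow
  exact Prod.ext hm hq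

lemma one_div_le (hn : n ≠ 1) (h : IsPrimeSolution n p) {k : ℕ} (hk : k ≠ 0) :
    1 / ((p.1 : ℝ) * (p.2 : ℝ) ^ p.1) ≤
      (((p.2 ^ p.1 / n : ℕ) : ℝ) ^ (-(1 + (k : ℝ)⁻¹)) + 1 / (p.1 : ℝ) ^ (k + 1))
        / n := by
  have hm : (0 : ℝ) < p.1 := by have := h.1; positivity
  have hu : (0 : ℝ) < (p.2 ^ p.1 / n : ℕ) := by exact_mod_cast h.div_pos hn
  have hn0 : (0 : ℝ) < n := by exact_mod_cast Nat.zero_lt_of_lt h.2.2.1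
  have hpow : (n : ℝ) * (p.2 ^ p.1 / n : ℕ) ≤ (p.2 : ℝ) ^ p.1 := by
    have := h.pow_eq hn
    exact_mod_cast (by omega : n * (p.2 ^ p.1 / n) ≤ p.2 ^ p.1)
  calc 1 / ((p.1 : ℝ) * (p.2 : ℝ) ^ p.1)
      ≤ 1 / ((p.1 : ℝ) * ((n : ℝ) * (p.2 ^ p.1 / n : ℕ))) := by gcongr
    _ = 1 / ((p.1 : ℝ) * (p.2 ^ p.1 / n : ℕ)) / n := by field_simp
    _ ≤ _ := by gcongr; exact one_div_mul_le_rpow_add_one_div_pow hm hu hk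

end IsPrimeSolution

section
variable {n : ℕ} {P : Finset (ℕ × ℕ)}

lemma card_filter_fst_eq_le (hP : ∀ p ∈ P, IsPrimeSolution n p) (m : ℕ) :
    #{p ∈ P | p.1 = m} ≤ #{x ∈ range n | x ^ m % n = 1 % n} := by
  refine card_le_card_of_injOn Prod.snd (fun p hp => ?_) fun p hp p' hp' hq => ?_
  · obtain ⟨hpP, rfl⟩ := mem_filter.1 hp
    exact mem_filter.2 ⟨mem_range.2 (hP p hpP).2.2.1, (hP p hpP).2.2.2⟩
  · exact Prod.ext ((mem_filter.1 hp).2.trans (mem_filter.1 hp').2.symm) hq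

lemma sum_div_rpow_neg_le (hn : n ≠ 1) (hP : ∀ p ∈ P, IsPrimeSolution n p) {s : ℝ}
    (hs : 0 < s) :
    ∑ p ∈ P, ((p.2 ^ p.1 / n : ℕ) : ℝ) ^ (-(1 + s)) ≤ 1 + 1 / s := by
  rw [← sum_image (f := fun v : ℕ => (v : ℝ) ^ (-(1 + s)))
    fun p hp p' hp' => IsPrimeSolution.injOn_div hn (hP p hp) (hP p' hp')]
  exact sum_rpow_neg_le hs _

lemma sum_one_div_fst_pow_le {k : ℕ}
    (hC : ∀ m, 2 ≤ m → #{x ∈ range n | x ^ m % n = 1 % n} ≤ 2 * m ^ k)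
    (hP : ∀ p ∈ P, IsPrimeSolution n p) :
    ∑ p ∈ P, 1 / (p.1 : ℝ) ^ (k + 2) ≤ 2 := by
  rw [sum_comp (fun m : ℕ => 1 / (m : ℝ) ^ (k + 2))]
  have hfst : ∀ m ∈ P.image Prod.fst, 2 ≤ m := by
    simp only [mem_image]
    rintro _ ⟨p, hp, rfl⟩
    exact (hP p hp).1
  calc ∑ m ∈ P.image Prod.fst, #{p ∈ P | p.1 = m} • (1 / (m : ℝ) ^ (k + 2))
      ≤ ∑ m ∈ P.image Prod.fst, 2 * ((m : ℝ) ^ 2)⁻¹ := by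
        refine sum_le_sum fun m hm => ?_
        have hcard : (#{p ∈ P | p.1 = m} : ℝ) ≤ 2 * (m : ℝ) ^ k := by
          exact_mod_cast (card_filter_fst_eq_le hP m).trans (hC m (hfst m hm))
        have hm0 : (m : ℝ) ≠ 0 := by have := hfst m hm; positivity
        calc #{p ∈ P | p.1 = m} • (1 / (m : ℝ) ^ (k + 2))
            ≤ 2 * (m : ℝ) ^ k * (1 / (m : ℝ) ^ (k + 2)) := by
              rw [nsmul_eq_mul]; gcongr
          _ = 2 * ((m : ℝ) ^ 2)⁻¹ := by field_simp; ring
    _ = 2 * ∑ m ∈ P.image Prod.fst, ((m : ℝ) ^ 2)⁻¹ := (mul_sum ..).symm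
    _ ≤ 2 * 1 := by gcongr; exact sum_inv_sq_le_one hfst
    _ = 2 := mul_one 2

lemma sum_one_div_mul_pow_le {k : ℕ} (hn : n ≠ 1)
    (hC : ∀ m, 2 ≤ m → #{x ∈ range n | x ^ m % n = 1 % n} ≤ 2 * m ^ k)
    (hP : ∀ p ∈ P, IsPrimeSolution n p) :
    ∑ p ∈ P, 1 / ((p.1 : ℝ) * (p.2 : ℝ) ^ p.1) ≤ (k + 4) / n := by
  have hs : (0 : ℝ) < ((k + 1 : ℕ) : ℝ)⁻¹ := by positivity
  calc ∑ p ∈ P, 1 / ((p.1 : ℝ) * (p.2 : ℝ) ^ p.1)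
      ≤ ∑ p ∈ P, (((p.2 ^ p.1 / n : ℕ) : ℝ) ^ (-(1 + ((k + 1 : ℕ) : ℝ)⁻¹))
          + 1 / (p.1 : ℝ) ^ (k + 2)) / n :=
        sum_le_sum fun p hp => (hP p hp).one_div_le hn k.succ_ne_zero
    _ = (∑ p ∈ P, ((p.2 ^ p.1 / n : ℕ) : ℝ) ^ (-(1 + ((k + 1 : ℕ) : ℝ)⁻¹))
          + ∑ p ∈ P, 1 / (p.1 : ℝ) ^ (k + 2)) / n := by rw [← sum_div, sum_add_distrib]
    _ ≤ ((1 + 1 / ((k + 1 : ℕ) : ℝ)⁻¹) + 2) / n := by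
        gcongr
        exacts [sum_div_rpow_neg_le hn hP hs, sum_one_div_fst_pow_le hC hP]
    _ = (k + 4) / n := by rw [one_div, inv_inv]; push_cast; ring

end

/-- For `n ≥ 2`, if the number of solutions of `x^m ≡ 1 (mod n)` is at most `2 m^{ω(n)}`
for each `m ≥ 2`, then `∑_{m ≥ 2} (1/m) ∑_{q prime, q < n, q^m ≡ 1 (n)} 1/q^m = O(ω(n)/n)`
with absolute implied constant. -/
theorem stmt_15 : ∃ K : ℝ, ∀ n : ℕ, 2 ≤ n →
    (∀ m : ℕ, 2 ≤ m →
      ((Finset.range n).filter (fun x => x ^ m % n = 1 % n)).card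
        ≤ 2 * m ^ n.primeFactors.card) →
    (∑' p : ℕ × ℕ, if 2 ≤ p.1 ∧ p.2.Prime ∧ p.2 < n ∧ p.2 ^ p.1 % n = 1 % n
      then 1 / ((p.1 : ℝ) * (p.2 : ℝ) ^ p.1) else 0)
    ≤ K * n.primeFactors.card / n := by
  refine ⟨5, fun n hn hC => tsum_le_of_sum_le' (by positivity) fun F => ?_⟩
  have hω : (1 : ℝ) ≤ n.primeFactors.card := by
    exact_mod_cast card_pos.2 (Nat.nonempty_primeFactors.2 (by omega))
  rw [← sum_filter]
  calc _ ≤ ((n.primeFactors.card : ℝ) + 4) / n :=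
        sum_one_div_mul_pow_le (by omega) hC fun _ hp => by exact (mem_filter.1 hp).2
    _ ≤ 5 * (n.primeFactors.card : ℝ) / n := by gcongr; linarith
end

section
/- Assume for each k ≥ 2 the bounds N_k^+(x) ≪ (∏_{p | k(k−1)} p/(p−1))·x/(log x)² and N_k^−(x) ≪ (∏_{p | k(k+1)} p/(p−1))·x/(log x)², where N_k^{±}(x) counts x < n ≤ 2x with n+1 and kn±1 both prime. Then ∑_{k=2}^{(2x)^δ} N_k^+(x)/k + ∑_{k=2}^{(2x)^δ} N_k^−(x)/k = O(δ·x/log x) for any fixed δ ∈ (0,1). -/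
/-!
Write `g n = ∏_{p ∣ n} p/(p-1)`. The assumed bounds reduce the claim to
`∑_{2 ≤ k ≤ K} (g(k(k-1)) + g(k(k+1)))/k ≪ log K` for `K = (2x)^δ`, since `log K ≤ 4 δ log x`
once `δ log x ≥ 1`. As `k` and `k ± 1` are coprime, `g(k(k±1)) = g(k) g(k±1)`, and AM-GM reduces
this to `∑_{k ≤ K} g(k)²/k ≪ log K`. For that, `g(k)² ≤ ∏_{p ∣ k} (1 + 6/p)` expands into a sum
over squarefree divisors `d ∣ k` of `6^ω(d)/d`; exchanging the sums gives at most
`harmonic K · ∏_p (1 + 6/p²) ≤ e¹² · harmonic K`.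
-/

open Finset Real

noncomputable def totientRatio (n : ℕ) : ℝ := ∏ p ∈ n.primeFactors, (p : ℝ) / ((p : ℝ) - 1)

lemma totientRatio_nonneg (n : ℕ) : 0 ≤ totientRatio n :=
  prod_nonneg fun p hp => div_nonneg (Nat.cast_nonneg p) <| sub_nonneg.2 <| by
    exact_mod_cast (Nat.prime_of_mem_primeFactors hp).one_le

lemma totientRatio_mul {a b : ℕ} (hab : a.Coprime b) :
    totientRatio (a * b) = totientRatio a * totientRatio b := by
  rw [totientRatio, hab.primeFactors_mul, prod_union hab.disjoint_primeFactors]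
  rfl

lemma div_pred_sq_le_one_add {p : ℝ} (hp : 2 ≤ p) : (p / (p - 1)) ^ 2 ≤ 1 + 6 / p := by
  have hp1 : 0 < p - 1 := by linarith
  rw [div_pow, div_le_iff₀ (by positivity), one_add_div (by positivity), div_mul_eq_mul_div,
    le_div_iff₀ (by positivity)]
  nlinarith

lemma totientRatio_sq_le (n : ℕ) :
    totientRatio n ^ 2 ≤ ∑ s ∈ n.primeFactors.powerset, ∏ p ∈ s, (6 : ℝ) / p := by
  rw [totientRatio, ← prod_pow, ← prod_one_add]
  exact prod_le_prod (fun _ _ => sq_nonneg _) fun p hp =>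
    div_pred_sq_le_one_add (by exact_mod_cast (Nat.prime_of_mem_primeFactors hp).two_le)

lemma sum_filter_dvd_inv_le (K : ℕ) {d : ℕ} (hd : d ≠ 0) :
    ∑ k ∈ (Icc 1 K).filter (d ∣ ·), (k : ℝ)⁻¹ ≤ harmonic K / d := by
  have hsub : (Icc 1 K).filter (d ∣ ·) ⊆ (Icc 1 K).image (d * ·) := by
    intro k hk
    obtain ⟨hk, j, rfl⟩ := mem_filter.1 hk
    have hj : j ≠ 0 := by rintro rfl; simp at hk
    exact mem_image.2 ⟨j, mem_Icc.2 ⟨Nat.one_le_iff_ne_zero.2 hj,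
      (Nat.le_mul_of_pos_left j (Nat.pos_of_ne_zero hd)).trans (mem_Icc.1 hk).2⟩, rfl⟩
  calc ∑ k ∈ (Icc 1 K).filter (d ∣ ·), (k : ℝ)⁻¹
      ≤ ∑ k ∈ (Icc 1 K).image (d * ·), (k : ℝ)⁻¹ :=
        sum_le_sum_of_subset_of_nonneg hsub fun _ _ _ => by positivity
    _ = ∑ j ∈ Icc 1 K, ((d * j : ℕ) : ℝ)⁻¹ :=
        sum_image fun _ _ _ _ h => Nat.eq_of_mul_eq_mul_left (Nat.pos_of_ne_zero hd) h
    _ = harmonic K / d := by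
        simp only [harmonic_eq_sum_Icc, Rat.cast_sum, Rat.cast_inv, Rat.cast_natCast, Nat.cast_mul,
          mul_inv, div_eq_mul_inv, mul_comm, mul_sum]

lemma prod_Icc_one_add_six_div_sq_le (K : ℕ) : ∏ p ∈ Icc 1 K, (1 + 6 / (p : ℝ) ^ 2) ≤ exp 12 := by
  refine (prod_one_add_le_exp_sum _ fun _ => by positivity).trans (exp_le_exp.2 ?_)
  have hIcc : Icc 1 K = Ioo 0 (K + 1) := by ext; simp; omega
  have hsq : ∑ p ∈ Ioo 0 (K + 1), ((p : ℝ) ^ 2)⁻¹ ≤ 2 := by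
    simpa using sum_Ioo_inv_sq_le (α := ℝ) 0 (K + 1)
  simp only [hIcc, div_eq_mul_inv, ← mul_sum]
  linarith

lemma totientRatio_sq_div_le {K k : ℕ} (hk : k ∈ Icc 1 K) :
    totientRatio k ^ 2 / k ≤
      ∑ s ∈ (Icc 1 K).powerset.filter (fun s => (∏ p ∈ s, p) ∣ k), (∏ p ∈ s, (6 : ℝ) / p) / k := by
  rw [mem_Icc] at hk
  refine (div_le_div_of_nonneg_right (totientRatio_sq_le k) k.cast_nonneg).trans ?_
  rw [sum_div]
  refine sum_le_sum_of_subset_of_nonneg (fun s hs => ?_) fun s _ _ => by positivity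
  rw [mem_powerset] at hs
  refine mem_filter.2 ⟨mem_powerset.2 fun p hp => ?_,
    (prod_dvd_prod_of_subset _ _ _ hs).trans k.prod_primeFactors_dvd⟩
  have hpk := Nat.le_of_dvd (by omega) (Nat.dvd_of_mem_primeFactors (hs hp))
  exact mem_Icc.2 ⟨(Nat.prime_of_mem_primeFactors (hs hp)).one_le, hpk.trans hk.2⟩

lemma sum_totientRatio_sq_div_le (K : ℕ) :
    ∑ k ∈ Icc 1 K, totientRatio k ^ 2 / k ≤ exp 12 * harmonic K := by
  set F : Finset ℕ → ℝ := fun s => ∏ p ∈ s, (6 : ℝ) / p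
  have hF : ∀ s, 0 ≤ F s := fun s => prod_nonneg fun _ _ => by positivity
  have hH : (0 : ℝ) ≤ harmonic K := by rw [harmonic_eq_sum_Icc]; positivity
  -- `s` runs over all subsets of `Icc 1 K`, not only sets of primes; the extra terms are `≥ 0`.
  calc ∑ k ∈ Icc 1 K, totientRatio k ^ 2 / k
      ≤ ∑ k ∈ Icc 1 K, ∑ s ∈ (Icc 1 K).powerset.filter (fun s => (∏ p ∈ s, p) ∣ k), F s / k :=
        sum_le_sum fun _ hk => totientRatio_sq_div_le hk
    _ = ∑ s ∈ (Icc 1 K).powerset, ∑ k ∈ (Icc 1 K).filter (fun k => (∏ p ∈ s, p) ∣ k), F s / k :=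
        sum_comm' fun k s => by simp only [mem_filter]; tauto
    _ ≤ ∑ s ∈ (Icc 1 K).powerset, F s * (harmonic K / (∏ p ∈ s, p : ℕ)) := by
        refine sum_le_sum fun s hs => ?_
        simp only [div_eq_mul_inv (F s), ← mul_sum]
        refine mul_le_mul_of_nonneg_left (sum_filter_dvd_inv_le K ?_) (hF s)
        exact prod_ne_zero_iff.2 fun p hp => by have := mem_Icc.1 (mem_powerset.1 hs hp); omega
    _ = harmonic K * ∏ p ∈ Icc 1 K, (1 + 6 / (p : ℝ) ^ 2) := by
        rw [prod_one_add, mul_sum]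
        refine sum_congr rfl fun s _ => ?_
        simp only [F, Nat.cast_prod, sq, ← div_div, prod_div_distrib]
        ring
    _ ≤ exp 12 * harmonic K := by
        rw [mul_comm]
        exact mul_le_mul_of_nonneg_right (prod_Icc_one_add_six_div_sq_le K) hH

lemma mul_div_le_sq_div_add_sq_div {a b x y : ℝ} (hx : 0 < x) (hy : 0 < y) (hyx : y ≤ 2 * x) :
    a * b / x ≤ a ^ 2 / x + b ^ 2 / y := by
  have hb : b ^ 2 / (2 * x) ≤ b ^ 2 / y := div_le_div_of_nonneg_left (sq_nonneg b) hy hyx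
  have ha : a ^ 2 / (2 * x) ≤ a ^ 2 / x :=
    div_le_div_of_nonneg_left (sq_nonneg a) hx (by linarith)
  calc a * b / x ≤ (a ^ 2 + b ^ 2) / (2 * x) := by
        rw [div_le_div_iff₀ hx (by positivity)]
        nlinarith [sq_nonneg (a - b)]
    _ ≤ a ^ 2 / x + b ^ 2 / y := by rw [add_div]; linarith

lemma totientRatio_mul_div_le {k j : ℕ} (hkj : k.Coprime j) (hk : 0 < k) (hj : 0 < j)
    (hjk : j ≤ 2 * k) :
    totientRatio (k * j) / k ≤ totientRatio k ^ 2 / k + totientRatio j ^ 2 / j := by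
  rw [totientRatio_mul hkj]
  exact mul_div_le_sq_div_add_sq_div (by exact_mod_cast hk) (by exact_mod_cast hj)
    (by exact_mod_cast hjk)

lemma sum_comp_le_sum {ι κ M : Type*} [DecidableEq κ] [AddCommMonoid M] [PartialOrder M]
    [IsOrderedAddMonoid M] {s : Finset ι} {t : Finset κ} {e : ι → κ} {f : κ → M}
    (he : Set.InjOn e s) (hst : Set.MapsTo e s t) (hf : ∀ j ∈ t, 0 ≤ f j) :
    ∑ i ∈ s, f (e i) ≤ ∑ j ∈ t, f j := by
  rw [← sum_image he]
  exact sum_le_sum_of_subset_of_nonneg (image_subset_iff.2 hst) fun j hj _ => hf j hj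

lemma sum_totientRatio_neighbours_div_le (K : ℕ) :
    ∑ k ∈ Icc 2 K, (totientRatio (k * (k - 1)) + totientRatio (k * (k + 1))) / k
      ≤ 4 * exp 12 * harmonic (K + 1) := by
  set f : ℕ → ℝ := fun j => totientRatio j ^ 2 / j
  have hf : ∀ j ∈ Icc 1 (K + 1), 0 ≤ f j := fun j _ => div_nonneg (sq_nonneg _) j.cast_nonneg
  have hshift : ∀ e : ℕ → ℕ, (∀ k, 2 ≤ k → k ≤ K → 1 ≤ e k ∧ e k ≤ K + 1) →
      Set.InjOn e (Icc 2 K) → ∑ k ∈ Icc 2 K, f (e k) ≤ ∑ j ∈ Icc 1 (K + 1), f j :=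
    fun e hmaps he => sum_comp_le_sum he
      (fun k hk => by have := mem_Icc.1 hk; exact mem_Icc.2 (hmaps k this.1 this.2)) hf
  calc ∑ k ∈ Icc 2 K, (totientRatio (k * (k - 1)) + totientRatio (k * (k + 1))) / k
      ≤ ∑ k ∈ Icc 2 K, (f (k - 1) + f k + f k + f (k + 1)) := by
        refine sum_le_sum fun k hk => ?_
        have hk := (mem_Icc.1 hk).1
        have hminus := totientRatio_mul_div_le ((Nat.coprime_self_sub_right (by omega)).2
          (Nat.coprime_one_right k)) (by omega) (by omega) (by omega)
        have hplus := totientRatio_mul_div_le (Nat.coprime_self_add_right.2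
          (Nat.coprime_one_right k)) (by omega) (by omega) (by omega)
        simp only [f, add_div] at *
        push_cast [Nat.cast_sub (by omega : 1 ≤ k)] at *
        linarith
    _ ≤ 4 * ∑ j ∈ Icc 1 (K + 1), f j := by
        simp only [sum_add_distrib]
        have h1 := hshift (· - 1) (fun k _ _ => by omega) fun a ha b hb h => by
          simp only [coe_Icc, Set.mem_Icc] at ha hb h; omega
        have h2 := hshift id (fun k _ _ => by dsimp only [id]; omega) (Set.injOn_id _)
        have h3 := hshift (· + 1) (fun k _ _ => by omega) fun a _ b _ h => by
          simp only at h; omega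
        simp only [id] at h2
        linarith
    _ ≤ 4 * exp 12 * harmonic (K + 1) := by
        rw [mul_assoc]
        exact mul_le_mul_of_nonneg_left (sum_totientRatio_sq_div_le (K + 1)) (by norm_num)

lemma sum_div_add_sum_div_le {N₁ N₂ : ℕ → ℝ} {B : ℝ} (K : ℕ) (hB : 0 ≤ B)
    (hN₁ : ∀ k ∈ Icc 2 K, N₁ k ≤ B * totientRatio (k * (k - 1)))
    (hN₂ : ∀ k ∈ Icc 2 K, N₂ k ≤ B * totientRatio (k * (k + 1))) :
    ∑ k ∈ Icc 2 K, N₁ k / k + ∑ k ∈ Icc 2 K, N₂ k / k ≤ B * (4 * exp 12 * harmonic (K + 1)) := by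
  calc ∑ k ∈ Icc 2 K, N₁ k / k + ∑ k ∈ Icc 2 K, N₂ k / k
      ≤ ∑ k ∈ Icc 2 K, B * ((totientRatio (k * (k - 1)) + totientRatio (k * (k + 1))) / k) := by
        rw [← sum_add_distrib]
        refine sum_le_sum fun k hk => ?_
        rw [mul_div_assoc', mul_add, add_div]
        gcongr
        exacts [hN₁ k hk, hN₂ k hk]
    _ ≤ B * (4 * exp 12 * harmonic (K + 1)) := by
        rw [← mul_sum]
        exact mul_le_mul_of_nonneg_left (sum_totientRatio_neighbours_div_le K) hB

lemma one_add_log_floor_rpow_add_one_le {x δ : ℝ} (hδ : 0 < δ) (hx : 2 ≤ x)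
    (hδx : 1 ≤ δ * log x) : 1 + log ((⌊(2 * x) ^ δ⌋₊ + 1 : ℕ) : ℝ) ≤ 4 * (δ * log x) := by
  have hy : 1 ≤ (2 * x) ^ δ := one_le_rpow (by linarith) hδ.le
  have hfloor : ((⌊(2 * x) ^ δ⌋₊ + 1 : ℕ) : ℝ) ≤ 2 * (2 * x) ^ δ := by
    push_cast
    linarith [Nat.floor_le (zero_le_one.trans hy)]
  have hlog2 : log 2 ≤ 1 := (log_two_lt_d9.trans (by norm_num)).le
  have hδlog2 : δ * log 2 ≤ δ * log x :=
    mul_le_mul_of_nonneg_left (log_le_log (by norm_num) hx) hδ.le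
  calc 1 + log ((⌊(2 * x) ^ δ⌋₊ + 1 : ℕ) : ℝ) ≤ 1 + log (2 * (2 * x) ^ δ) := by
        gcongr
    _ = 1 + log 2 + (δ * log 2 + δ * log x) := by
        rw [log_mul two_ne_zero (by positivity), log_rpow (by linarith),
          log_mul two_ne_zero (by linarith)]
        ring
    _ ≤ 4 * (δ * log x) := by linarith

/-- Assuming for each `k ≥ 2` the bounds
`N_k^±(x) ≪ (∏_{p | k(k∓1)} p/(p−1)) x/(log x)²` where `N_k^±(x)` counts `x < n ≤ 2x`
with `n+1` and `kn±1` both prime, one has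
`∑_{k=2}^{(2x)^δ} N_k^+(x)/k + ∑_{k=2}^{(2x)^δ} N_k^−(x)/k = O(δ x / log x)`
for every fixed `δ ∈ (0,1)`, with implied constant independent of `δ`. -/
theorem stmt_17
    (hsieve : ∃ C : ℝ, ∀ k : ℕ, ∀ x : ℝ, 2 ≤ k → 2 ≤ x →
      ((((Finset.Ioc ⌊x⌋₊ (2 * ⌊x⌋₊)).filter (fun n =>
            (n + 1).Prime ∧ (k * n + 1).Prime)).card : ℝ)
          ≤ C * (∏ p ∈ (k * (k - 1)).primeFactors, (p : ℝ) / ((p : ℝ) - 1))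
              * x / Real.log x ^ 2)
        ∧ ((((Finset.Ioc ⌊x⌋₊ (2 * ⌊x⌋₊)).filter (fun n =>
            (n + 1).Prime ∧ (k * n - 1).Prime)).card : ℝ)
          ≤ C * (∏ p ∈ (k * (k + 1)).primeFactors, (p : ℝ) / ((p : ℝ) - 1))
              * x / Real.log x ^ 2)) :
    ∃ C' : ℝ, ∀ δ : ℝ, 0 < δ → δ < 1 → ∃ x₀ : ℝ, ∀ x : ℝ, x₀ ≤ x →
      (∑ k ∈ Finset.Icc 2 ⌊(2 * x) ^ δ⌋₊,
          (((Finset.Ioc ⌊x⌋₊ (2 * ⌊x⌋₊)).filter (fun n =>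
            (n + 1).Prime ∧ (k * n + 1).Prime)).card : ℝ) / k)
      + (∑ k ∈ Finset.Icc 2 ⌊(2 * x) ^ δ⌋₊,
          (((Finset.Ioc ⌊x⌋₊ (2 * ⌊x⌋₊)).filter (fun n =>
            (n + 1).Prime ∧ (k * n - 1).Prime)).card : ℝ) / k)
      ≤ C' * δ * x / Real.log x := by
  obtain ⟨C, hC⟩ := hsieve
  refine ⟨16 * exp 12 * max C 0, fun δ hδ _ => ⟨max 2 (exp (1 / δ)), fun x hx => ?_⟩⟩
  have hx2 : 2 ≤ x := le_of_max_le_left hx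
  have hlog : 0 < log x := log_pos (by linarith)
  have hδx : 1 ≤ δ * log x := by
    rw [← div_le_iff₀' hδ, ← log_exp (1 / δ)]
    exact log_le_log (exp_pos _) (le_of_max_le_right hx)
  set B := max C 0 * x / log x ^ 2
  have hB : 0 ≤ B := by positivity
  have hbound {N : ℝ} {m : ℕ} (h : N ≤ C * totientRatio m * x / log x ^ 2) :
      N ≤ B * totientRatio m := by
    calc N ≤ C * totientRatio m * x / log x ^ 2 := h
      _ = C * x / log x ^ 2 * totientRatio m := by ring
      _ ≤ B * totientRatio m :=
        mul_le_mul_of_nonneg_right (by unfold B; gcongr; exact le_max_left _ _)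
          (totientRatio_nonneg m)
  refine (sum_div_add_sum_div_le _ hB (fun k hk => hbound (hC k x (mem_Icc.1 hk).1 hx2).1)
    fun k hk => hbound (hC k x (mem_Icc.1 hk).1 hx2).2).trans ?_
  calc B * (4 * exp 12 * harmonic (⌊(2 * x) ^ δ⌋₊ + 1))
      ≤ B * (4 * exp 12 * (4 * (δ * log x))) := by
        gcongr
        exact (harmonic_le_one_add_log _).trans (one_add_log_floor_rpow_add_one_le hδ hx2 hδx)
    _ = 16 * exp 12 * max C 0 * δ * x / log x := by
        unfold B
        field_simp
        ring
end

section
/- Assuming the divisor bound d(N) = o(N^δ) for every δ > 0, we have ∑_{x < n < 2x} S_n = O(log log x · x^{−1/4}/(log x)³), where S_n = ∑_{3 ≤ m ≤ 4 log n} (1/m) ∑_{q prime, q^m ≡ ±1 (mod n), q^m ≤ n (log n)²} 1/q^m. -/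
open Filter Asymptotics

/-- `S_n = ∑_{3 ≤ m ≤ 4 log n} (1/m) ∑_{q prime, q^m ≡ ±1 (n), q^m ≤ n (log n)²} 1/q^m`. -/
noncomputable def Ssum (n : ℕ) : ℝ :=
  ∑ m ∈ Finset.Icc 3 ⌊4 * Real.log n⌋₊, (1 / (m : ℝ)) *
    ∑' q : ℕ, if q.Prime ∧ ((q : ZMod n) ^ m = 1 ∨ (q : ZMod n) ^ m = -1) ∧
        (q : ℝ) ^ m ≤ (n : ℝ) * Real.log n ^ 2
      then 1 / (q : ℝ) ^ m else 0

noncomputable def Fq (n m q : ℕ) : ℝ :=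
  if q.Prime ∧ ((q : ZMod n) ^ m = 1 ∨ (q : ZMod n) ^ m = -1) ∧
      (q : ℝ) ^ m ≤ (n : ℝ) * Real.log n ^ 2
    then 1 / (q : ℝ) ^ m else 0

lemma Ssum_eq (n : ℕ) :
    Ssum n = ∑ m ∈ Finset.Icc 3 ⌊4 * Real.log n⌋₊, (1 / (m : ℝ)) * ∑' q : ℕ, Fq n m q := rfl

lemma Fq_nonneg (n m q : ℕ) : 0 ≤ Fq n m q := by
  unfold Fq; split
  · positivity
  · exact le_refl 0

lemma card_div_le_self (N : ℕ) : N.divisors.card ≤ N := by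
  classical
  calc N.divisors.card ≤ (Finset.Icc 1 N).card := Finset.card_le_card (fun d hd => by
        rcases Nat.mem_divisors.mp hd with ⟨h1, h2⟩
        exact Finset.mem_Icc.mpr ⟨Nat.one_le_iff_ne_zero.mpr (fun h => by
          subst h; exact h2 (zero_dvd_iff.mp h1)), Nat.le_of_dvd (Nat.pos_of_ne_zero h2) h1⟩)
    _ = N := by simp

lemma global_div_bound (hdiv : ∀ δ : ℝ, 0 < δ →
      (fun N : ℕ => (N.divisors.card : ℝ)) =o[atTop] fun N : ℕ => (N : ℝ) ^ δ) :
    ∃ C : ℝ, 1 ≤ C ∧ ∀ N : ℕ, (N.divisors.card : ℝ) ≤ C * (N:ℝ) ^ (11/240 / (11/10) : ℝ) := by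
  set δ : ℝ := 11/240 / (11/10) with hδ
  have hδpos : 0 < δ := by norm_num [hδ]
  have h := (hdiv δ hδpos).isBigO
  rw [isBigO_iff] at h
  obtain ⟨c, hc⟩ := h
  rw [eventually_atTop] at hc
  obtain ⟨N0, hN0⟩ := hc
  refine ⟨max 1 (max c N0), le_max_left _ _, fun N => ?_⟩
  rcases eq_or_ne N 0 with rfl | hN
  · simp [Real.zero_rpow (ne_of_gt hδpos)]
  have hN1 : (1:ℝ) ≤ (N:ℝ) := by exact_mod_cast Nat.one_le_iff_ne_zero.mpr hN
  have hrp : (1:ℝ) ≤ (N:ℝ) ^ δ := Real.one_le_rpow hN1 hδpos.le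
  rcases le_or_gt N0 N with hle | hlt
  · have := hN0 N hle
    rw [Real.norm_eq_abs, Real.norm_eq_abs, abs_of_nonneg (by positivity),
      abs_of_nonneg (by positivity)] at this
    calc (N.divisors.card : ℝ) ≤ c * (N:ℝ) ^ δ := this
      _ ≤ max 1 (max c N0) * (N:ℝ) ^ δ := by
          apply mul_le_mul_of_nonneg_right _ (by positivity)
          exact le_max_of_le_right (le_max_left _ _)
  · calc (N.divisors.card : ℝ) ≤ (N:ℝ) := by exact_mod_cast card_div_le_self N
      _ ≤ (N0:ℝ) := by exact_mod_cast hlt.le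
      _ = (N0:ℝ) * 1 := by ring
      _ ≤ max 1 (max c N0) * (N:ℝ) ^ δ := by
          apply mul_le_mul _ hrp (by norm_num) (by positivity)
          exact le_max_of_le_right (le_max_right _ _)

lemma zmod_one_dvd {n q m : ℕ} (hq : 1 ≤ q ^ m) (h : (q : ZMod n) ^ m = 1) : n ∣ q ^ m - 1 := by
  have h2 : ((q ^ m : ℕ) : ZMod n) = ((1 : ℕ) : ZMod n) := by push_cast; simpa using h
  have hmod : 1 ≡ q ^ m [MOD n] := ((ZMod.natCast_eq_natCast_iff _ _ _).mp h2).symm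
  exact (Nat.modEq_iff_dvd' hq).mp hmod

lemma zmod_neg_one_dvd {n q m : ℕ} (h : (q : ZMod n) ^ m = -1) : n ∣ q ^ m + 1 := by
  have h2 : ((q ^ m + 1 : ℕ) : ZMod n) = 0 := by push_cast; rw [h]; ring
  exact (ZMod.natCast_eq_zero_iff _ _).mp h2

lemma eight_le_pow {q m : ℕ} (hq : q.Prime) (hm : 3 ≤ m) : 8 ≤ q ^ m := by
  calc (8:ℕ) = 2 ^ 3 := rfl
    _ ≤ q ^ 3 := Nat.pow_le_pow_left hq.two_le 3
    _ ≤ q ^ m := Nat.pow_le_pow_right hq.one_le hm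

lemma cond_bounds {x n m q : ℕ} (hx : x < n) (hm : 3 ≤ m) (hq : q.Prime)
    (hdvd : (q : ZMod n) ^ m = 1 ∨ (q : ZMod n) ^ m = -1) :
    x ≤ q ^ m ∧ (n ∣ q ^ m - 1 ∨ n ∣ q ^ m + 1) := by
  have h8 : 8 ≤ q ^ m := eight_le_pow hq hm
  rcases hdvd with h1 | h1
  · have hd := zmod_one_dvd (by omega) h1
    have := Nat.le_of_dvd (by omega) hd
    exact ⟨by omega, Or.inl hd⟩
  · have hd := zmod_neg_one_dvd h1
    have := Nat.le_of_dvd (by omega) hd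
    exact ⟨by omega, Or.inr hd⟩

set_option maxHeartbeats 2000000 in
/-- Assuming the divisor bound `d(N) = o(N^δ)` for every `δ > 0`,
`∑_{x < n < 2x} S_n = O(log log x · x^{-1/4} / (log x)³)`. -/
theorem stmt_18
    (hdiv : ∀ δ : ℝ, 0 < δ →
      (fun N : ℕ => (N.divisors.card : ℝ)) =o[atTop] fun N : ℕ => (N : ℝ) ^ δ) :
    (fun x : ℕ => ∑ n ∈ Finset.Ioo x (2 * x), Ssum n)
      =O[atTop] fun x : ℕ =>
        Real.log (Real.log x) * (x : ℝ) ^ (-(1 / 4 : ℝ)) / Real.log x ^ 3 := by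
  classical
  obtain ⟨C, hC1, hC⟩ := global_div_bound hdiv
  have hCpos : (0:ℝ) < C := lt_of_lt_of_le one_pos hC1
  rw [isBigO_iff]
  refine ⟨1, ?_⟩
  -- eventual log bounds on ℝ
  have hlog : ∀ c r : ℝ, 0 < c → 0 < r → ∀ᶠ y : ℝ in atTop, Real.log y ≤ c * y ^ r := by
    intro c r hc hr
    filter_upwards [IsLittleO.def (isLittleO_log_rpow_atTop hr) hc, eventually_ge_atTop (0:ℝ)]
      with y h h0
    calc Real.log y ≤ ‖Real.log y‖ := le_abs_self _
      _ ≤ c * ‖y ^ r‖ := h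
      _ = c * y ^ r := by
          rw [Real.norm_eq_abs, abs_of_nonneg (Real.rpow_nonneg h0 r)]
  have h2y : Tendsto (fun y : ℝ => 2 * y) atTop atTop :=
    Tendsto.const_mul_atTop (by norm_num) tendsto_id
  have hlog2 : ∀ᶠ y : ℝ in atTop, Real.log (2*y) ≤ 2 * y ^ ((1:ℝ)/100) := by
    filter_upwards [h2y.eventually (hlog 1 (1/100) one_pos (by norm_num)),
      eventually_ge_atTop (1:ℝ)] with y h hy
    have h0 : (0:ℝ) ≤ y := by linarith
    calc Real.log (2*y) ≤ 1 * (2*y) ^ ((1:ℝ)/100) := h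
      _ = (2:ℝ) ^ ((1:ℝ)/100) * y ^ ((1:ℝ)/100) := by
          rw [one_mul, Real.mul_rpow (by norm_num) h0]
      _ ≤ 2 * y ^ ((1:ℝ)/100) := by
          apply mul_le_mul_of_nonneg_right _ (Real.rpow_nonneg h0 _)
          calc (2:ℝ) ^ ((1:ℝ)/100) ≤ (2:ℝ) ^ (1:ℝ) :=
                Real.rpow_le_rpow_of_exponent_le one_le_two (by norm_num)
            _ = 2 := Real.rpow_one 2
  have hE2 : ∀ᶠ y : ℝ in atTop, 2*y*(Real.log (2*y))^2 + 1 ≤ y ^ ((11:ℝ)/10) := by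
    filter_upwards [hlog2, eventually_ge_atTop (1:ℝ),
      (tendsto_rpow_atTop (show (0:ℝ) < 1/100 by norm_num)).eventually_ge_atTop (9:ℝ)]
      with y hl hy ht
    have hy0 : (0:ℝ) < y := by linarith
    have hl0 : 0 ≤ Real.log (2*y) := Real.log_nonneg (by linarith)
    have hsq : (Real.log (2*y))^2 ≤ (2 * y ^ ((1:ℝ)/100))^2 := by
      apply pow_le_pow_left₀ hl0 hl
    have e1 : (y ^ ((1:ℝ)/100))^2 = y ^ ((1:ℝ)/50) := by
      rw [← Real.rpow_natCast (y ^ ((1:ℝ)/100)) 2, ← Real.rpow_mul hy0.le]; norm_num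
    have e2 : y * y ^ ((1:ℝ)/50) = y ^ ((51:ℝ)/50) := by
      nth_rewrite 1 [← Real.rpow_one y]
      rw [← Real.rpow_add hy0]; norm_num
    have e3 : y ^ ((1:ℝ)/50) * y ^ ((51:ℝ)/50) ≤ y ^ ((1:ℝ)/50) * y ^ ((51:ℝ)/50) := le_refl _
    have h51 : (1:ℝ) ≤ y ^ ((51:ℝ)/50) := Real.one_le_rpow hy (by norm_num)
    have h9 : 9 * y ^ ((51:ℝ)/50) ≤ y ^ ((11:ℝ)/10) := by
      have hup : y ^ ((1:ℝ)/100) ≤ y ^ ((2:ℝ)/25) :=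
        Real.rpow_le_rpow_of_exponent_le hy (by norm_num)
      have e : y ^ ((11:ℝ)/10) = y ^ ((2:ℝ)/25) * y ^ ((51:ℝ)/50) := by
        rw [← Real.rpow_add hy0]; norm_num
      rw [e]
      exact mul_le_mul_of_nonneg_right (by linarith) (Real.rpow_nonneg hy0.le _)
    have hle : 2*y*(Real.log (2*y))^2 ≤ 8 * y ^ ((51:ℝ)/50) := by
      calc 2*y*(Real.log (2*y))^2 ≤ 2*y*(2 * y ^ ((1:ℝ)/100))^2 := by
            apply mul_le_mul_of_nonneg_left hsq (by linarith)
        _ = 8 * (y * (y ^ ((1:ℝ)/100))^2) := by ring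
        _ = 8 * y ^ ((51:ℝ)/50) := by rw [e1, e2]
    linarith
  have hE3 : ∀ᶠ y : ℝ in atTop, 4 * Real.log (2*y) ≤ y ^ ((1:ℝ)/50) := by
    filter_upwards [hlog2, eventually_ge_atTop (1:ℝ),
      (tendsto_rpow_atTop (show (0:ℝ) < 1/100 by norm_num)).eventually_ge_atTop (8:ℝ)]
      with y hl hy ht
    have hy0 : (0:ℝ) < y := by linarith
    have e : y ^ ((1:ℝ)/50) = y ^ ((1:ℝ)/100) * y ^ ((1:ℝ)/100) := by
      rw [← Real.rpow_add hy0]; norm_num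
    calc 4 * Real.log (2*y) ≤ 4 * (2 * y ^ ((1:ℝ)/100)) := by linarith
      _ = 8 * y ^ ((1:ℝ)/100) := by ring
      _ ≤ y ^ ((1:ℝ)/100) * y ^ ((1:ℝ)/100) := by
          apply mul_le_mul_of_nonneg_right ht (Real.rpow_nonneg hy0.le _)
      _ = y ^ ((1:ℝ)/50) := e.symm
  have hE4 : ∀ᶠ y : ℝ in atTop, 2*C*(Real.log y)^3 ≤ y ^ ((1:ℝ)/4) := by
    have hc : (0:ℝ) < 1/(2*C) := by positivity
    filter_upwards [hlog (1/(2*C)) (1/12) hc (by norm_num), eventually_ge_atTop (1:ℝ)]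
      with y hl hy
    have hy0 : (0:ℝ) < y := by linarith
    have hl0 : 0 ≤ Real.log y := Real.log_nonneg hy
    have hcube : (Real.log y)^3 ≤ (1/(2*C) * y ^ ((1:ℝ)/12))^3 := pow_le_pow_left₀ hl0 hl 3
    have e : (y ^ ((1:ℝ)/12))^3 = y ^ ((1:ℝ)/4) := by
      rw [← Real.rpow_natCast (y ^ ((1:ℝ)/12)) 3, ← Real.rpow_mul hy0.le]; norm_num
    have h14 : (0:ℝ) ≤ y ^ ((1:ℝ)/4) := Real.rpow_nonneg hy0.le _
    calc 2*C*(Real.log y)^3 ≤ 2*C*((1/(2*C) * y ^ ((1:ℝ)/12))^3) := by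
          apply mul_le_mul_of_nonneg_left hcube (by positivity)
      _ = (1/(4*C^2)) * y ^ ((1:ℝ)/4) := by rw [mul_pow, e]; field_simp; ring
      _ ≤ 1 * y ^ ((1:ℝ)/4) := by
          apply mul_le_mul_of_nonneg_right _ h14
          rw [div_le_one (by positivity)]; nlinarith
      _ = y ^ ((1:ℝ)/4) := one_mul _
  have hE5 : ∀ᶠ y : ℝ in atTop, 1 ≤ Real.log (Real.log y) :=
    (Real.tendsto_log_atTop.comp Real.tendsto_log_atTop).eventually_ge_atTop 1
  have hE6 : ∀ᶠ y : ℝ in atTop, 1 ≤ Real.log y := Real.tendsto_log_atTop.eventually_ge_atTop 1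
  have hcast : Tendsto (fun x : ℕ => (x:ℝ)) atTop atTop := tendsto_natCast_atTop_atTop
  filter_upwards [hcast.eventually hE2, hcast.eventually hE3, hcast.eventually hE4,
    hcast.eventually hE5, hcast.eventually hE6, eventually_ge_atTop 1] with x hx2 hx3 hx4 hx5 hx6 hx1
  set y : ℝ := (x:ℝ) with hy
  have hy1 : (1:ℝ) ≤ y := by rw [hy]; exact_mod_cast hx1
  have hy0 : (0:ℝ) < y := by linarith
  set M : ℕ := ⌊4 * Real.log (2*y)⌋₊ with hM
  set B : ℕ := ⌊y ^ ((11:ℝ)/10)⌋₊ + 1 with hB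
  set Q : ℕ := ⌊y ^ ((2:ℝ)/5)⌋₊ + 1 with hQ
  have hlog2y0 : 0 ≤ Real.log (2*y) := Real.log_nonneg (by linarith)
  -- bound on n * log n ^ 2 for n in range
  have hnL : ∀ n ∈ Finset.Ioo x (2*x), (n:ℝ) * Real.log n ^ 2 ≤ y ^ ((11:ℝ)/10) - 1 := by
    intro n hn
    rw [Finset.mem_Ioo] at hn
    have hn1 : (1:ℝ) ≤ (n:ℝ) := by
      have : 1 ≤ n := by omega
      exact_mod_cast this
    have hn2y : (n:ℝ) ≤ 2*y := by
      have : (n:ℝ) ≤ ((2*x : ℕ):ℝ) := by exact_mod_cast hn.2.le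
      rwa [Nat.cast_mul, Nat.cast_ofNat] at this
    have hlogn : Real.log n ≤ Real.log (2*y) := Real.log_le_log (by linarith) hn2y
    have hlogn0 : 0 ≤ Real.log n := Real.log_nonneg hn1
    have : (n:ℝ) * Real.log n ^ 2 ≤ 2*y*(Real.log (2*y))^2 := by
      apply mul_le_mul hn2y (by apply pow_le_pow_left₀ hlogn0 hlogn) (by positivity) (by linarith)
    linarith
  -- Step A : Ssum n ≤ double finite sum
  have stepA : ∀ n ∈ Finset.Ioo x (2*x),
      Ssum n ≤ ∑ m ∈ Finset.Icc 3 M, ∑ q ∈ Finset.range B, (1/(m:ℝ)) * Fq n m q := by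
    intro n hn
    have hnIoo := hn
    rw [Finset.mem_Ioo] at hn
    have hn1R : (1:ℝ) ≤ (n:ℝ) := by
      have : 1 ≤ n := by omega
      exact_mod_cast this
    have hn2y : (n:ℝ) ≤ 2*y := by
      have : (n:ℝ) ≤ ((2*x : ℕ):ℝ) := by exact_mod_cast hn.2.le
      rwa [Nat.cast_mul, Nat.cast_ofNat] at this
    have htsum : ∀ m ∈ Finset.Icc 3 ⌊4 * Real.log n⌋₊,
        (1/(m:ℝ)) * ∑' q : ℕ, Fq n m q = ∑ q ∈ Finset.range B, (1/(m:ℝ)) * Fq n m q := by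
      intro m hm
      rw [Finset.mem_Icc] at hm
      rw [← Finset.mul_sum]
      congr 1
      apply tsum_eq_sum
      intro q hq
      unfold Fq
      rw [if_neg]
      rintro ⟨hqp, hdv, hle⟩
      apply hq
      rw [Finset.mem_range, hB]
      have hq1 : (1:ℝ) ≤ (q:ℝ) := by exact_mod_cast hqp.one_le
      have hqm : (q:ℝ) ≤ (q:ℝ)^m := le_self_pow₀ hq1 (by omega)
      have : (q:ℝ) ≤ y ^ ((11:ℝ)/10) := by
        have := hnL n hnIoo
        linarith
      exact Nat.lt_succ_of_le (Nat.le_floor this)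
    rw [Ssum_eq, Finset.sum_congr rfl htsum]
    apply Finset.sum_le_sum_of_subset_of_nonneg
    · apply Finset.Icc_subset_Icc_right
      apply Nat.floor_le_floor
      have : Real.log n ≤ Real.log (2*y) := Real.log_le_log (by linarith) hn2y
      linarith
    · intro m _ _
      apply Finset.sum_nonneg
      intro q _
      have := Fq_nonneg n m q
      positivity
  -- Step C : per (m,q) bound after swapping
  have stepC : ∀ m ∈ Finset.Icc 3 M, ∀ q ∈ Finset.range B,
      ∑ n ∈ Finset.Ioo x (2*x), (1/(m:ℝ)) * Fq n m q ≤
        if q < Q then 2*C*y ^ ((11:ℝ)/240)/(3*y) else 0 := by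
    intro m hm q _
    rw [Finset.mem_Icc] at hm
    by_cases hex : ∃ n ∈ Finset.Ioo x (2*x), q.Prime ∧
        ((q : ZMod n) ^ m = 1 ∨ (q : ZMod n) ^ m = -1) ∧
        (q : ℝ) ^ m ≤ (n : ℝ) * Real.log n ^ 2
    · obtain ⟨n0, hn0, hqp, hdv0, hle0⟩ := hex
      have hq1 : (1:ℝ) ≤ (q:ℝ) := by exact_mod_cast hqp.one_le
      have hqm_le : (q:ℝ)^m ≤ y ^ ((11:ℝ)/10) - 1 := le_trans hle0 (hnL n0 hn0)
      have hq3m : (q:ℝ)^3 ≤ (q:ℝ)^m := pow_le_pow_right₀ hq1 hm.1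
      have hqle : (q:ℝ) ≤ y ^ ((11:ℝ)/30) := by
        by_contra hcon
        push_neg at hcon
        have h30 : (0:ℝ) ≤ y ^ ((11:ℝ)/30) := Real.rpow_nonneg hy0.le _
        have : y ^ ((11:ℝ)/10) < (q:ℝ)^3 := by
          have h3 : (y ^ ((11:ℝ)/30))^(3:ℕ) < (q:ℝ)^3 := by
            apply pow_lt_pow_left₀ hcon h30 (by norm_num)
          have e : (y ^ ((11:ℝ)/30))^(3:ℕ) = y ^ ((11:ℝ)/10) := by
            rw [← Real.rpow_natCast (y ^ ((11:ℝ)/30)) 3, ← Real.rpow_mul hy0.le]; norm_num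
          linarith [e ▸ h3]
        linarith
      have hqQ : q < Q := by
        have : (q:ℝ) ≤ y ^ ((2:ℝ)/5) :=
          hqle.trans (Real.rpow_le_rpow_of_exponent_le hy1 (by norm_num))
        exact Nat.lt_succ_of_le (Nat.le_floor this)
      rw [if_pos hqQ]
      set A1 : ℕ := q^m - 1 with hA1
      set A2 : ℕ := q^m + 1 with hA2
      have h8 : 8 ≤ q^m := eight_le_pow hqp hm.1
      have key : ∀ n ∈ Finset.Ioo x (2*x), (1/(m:ℝ)) * Fq n m q ≤
          if (n ∣ A1 ∨ n ∣ A2) then 1/(3*y) else 0 := by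
        intro n hn
        rw [Finset.mem_Ioo] at hn
        by_cases hc : q.Prime ∧ ((q : ZMod n) ^ m = 1 ∨ (q : ZMod n) ^ m = -1) ∧
            (q : ℝ) ^ m ≤ (n : ℝ) * Real.log n ^ 2
        · obtain ⟨hxle, hdvd⟩ := cond_bounds hn.1 hm.1 hc.1 hc.2.1
          rw [if_pos hdvd]
          unfold Fq
          rw [if_pos hc]
          have hqmy : y ≤ (q:ℝ)^m := by
            have : ((x:ℕ):ℝ) ≤ ((q^m : ℕ):ℝ) := by exact_mod_cast hxle
            push_cast at this
            linarith
          have hqm0 : (0:ℝ) < (q:ℝ)^m := by positivity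
          have h1 : 1/(q:ℝ)^m ≤ 1/y := one_div_le_one_div_of_le hy0 hqmy
          have h2 : 1/(m:ℝ) ≤ 1/3 := by
            apply one_div_le_one_div_of_le (by norm_num)
            exact_mod_cast hm.1
          calc (1/(m:ℝ)) * (1/(q:ℝ)^m) ≤ (1/3) * (1/y) := by
                apply mul_le_mul h2 h1 (by positivity) (by norm_num)
            _ = 1/(3*y) := by field_simp
        · unfold Fq
          rw [if_neg hc, mul_zero]
          split
          · positivity
          · exact le_refl 0
      have hA1ne : A1 ≠ 0 := by omega
      have hA2ne : A2 ≠ 0 := by omega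
      have hcard : (Finset.filter (fun n => n ∣ A1 ∨ n ∣ A2) (Finset.Ioo x (2*x))).card ≤
          A1.divisors.card + A2.divisors.card := by
        calc (Finset.filter (fun n => n ∣ A1 ∨ n ∣ A2) (Finset.Ioo x (2*x))).card
            ≤ (Finset.filter (fun n => n ∣ A1) (Finset.Ioo x (2*x)) ∪
                Finset.filter (fun n => n ∣ A2) (Finset.Ioo x (2*x))).card := by
              apply Finset.card_le_card
              rw [← Finset.filter_or]
          _ ≤ (Finset.filter (fun n => n ∣ A1) (Finset.Ioo x (2*x))).card +
                (Finset.filter (fun n => n ∣ A2) (Finset.Ioo x (2*x))).card :=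
              Finset.card_union_le _ _
          _ ≤ A1.divisors.card + A2.divisors.card := by
              apply Nat.add_le_add
              · apply Finset.card_le_card
                intro n hn
                rw [Finset.mem_filter] at hn
                exact Nat.mem_divisors.mpr ⟨hn.2, hA1ne⟩
              · apply Finset.card_le_card
                intro n hn
                rw [Finset.mem_filter] at hn
                exact Nat.mem_divisors.mpr ⟨hn.2, hA2ne⟩
      have hdA1 : (A1.divisors.card : ℝ) ≤ C * y ^ ((11:ℝ)/240) := by
        have hle : (A1:ℝ) ≤ y ^ ((11:ℝ)/10) := by
          have h1 : (A1:ℝ) ≤ ((q^m : ℕ):ℝ) := by exact_mod_cast Nat.sub_le _ _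
          push_cast at h1
          linarith
        calc (A1.divisors.card : ℝ) ≤ C * (A1:ℝ) ^ (11/240 / (11/10) : ℝ) := hC A1
          _ ≤ C * (y ^ ((11:ℝ)/10)) ^ (11/240 / (11/10) : ℝ) := by
              apply mul_le_mul_of_nonneg_left _ hCpos.le
              exact Real.rpow_le_rpow (Nat.cast_nonneg _) hle (by norm_num)
          _ = C * y ^ ((11:ℝ)/240) := by
              rw [← Real.rpow_mul hy0.le]; norm_num
      have hdA2 : (A2.divisors.card : ℝ) ≤ C * y ^ ((11:ℝ)/240) := by
        have hle : (A2:ℝ) ≤ y ^ ((11:ℝ)/10) := by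
          have h1 : (A2:ℝ) = (q:ℝ)^m + 1 := by push_cast [hA2]; ring
          linarith
        calc (A2.divisors.card : ℝ) ≤ C * (A2:ℝ) ^ (11/240 / (11/10) : ℝ) := hC A2
          _ ≤ C * (y ^ ((11:ℝ)/10)) ^ (11/240 / (11/10) : ℝ) := by
              apply mul_le_mul_of_nonneg_left _ hCpos.le
              exact Real.rpow_le_rpow (Nat.cast_nonneg _) hle (by norm_num)
          _ = C * y ^ ((11:ℝ)/240) := by
              rw [← Real.rpow_mul hy0.le]; norm_num
      calc ∑ n ∈ Finset.Ioo x (2*x), (1/(m:ℝ)) * Fq n m q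
          ≤ ∑ n ∈ Finset.Ioo x (2*x), if (n ∣ A1 ∨ n ∣ A2) then 1/(3*y) else 0 :=
            Finset.sum_le_sum key
        _ = ((Finset.filter (fun n => n ∣ A1 ∨ n ∣ A2) (Finset.Ioo x (2*x))).card : ℝ) *
              (1/(3*y)) := by
            rw [Finset.sum_ite, Finset.sum_const, Finset.sum_const_zero, add_zero,
              nsmul_eq_mul]
        _ ≤ ((A1.divisors.card + A2.divisors.card : ℕ) : ℝ) * (1/(3*y)) := by
            apply mul_le_mul_of_nonneg_right _ (by positivity)
            exact_mod_cast hcard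
        _ ≤ (2*C*y ^ ((11:ℝ)/240)) * (1/(3*y)) := by
            apply mul_le_mul_of_nonneg_right _ (by positivity)
            push_cast
            linarith
        _ = 2*C*y ^ ((11:ℝ)/240)/(3*y) := by ring
    · have hz : ∑ n ∈ Finset.Ioo x (2*x), (1/(m:ℝ)) * Fq n m q = 0 := by
        apply Finset.sum_eq_zero
        intro n hn
        unfold Fq
        rw [if_neg (fun hc => hex ⟨n, hn, hc⟩), mul_zero]
      rw [hz]
      split
      · positivity
      · exact le_refl 0
  -- Combine
  have hsum_le : ∑ n ∈ Finset.Ioo x (2*x), Ssum n ≤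
      (M:ℝ) * ((Q:ℝ) * (2*C*y ^ ((11:ℝ)/240)/(3*y))) := by
    have c0 : (0:ℝ) ≤ 2*C*y ^ ((11:ℝ)/240)/(3*y) := by positivity
    calc ∑ n ∈ Finset.Ioo x (2*x), Ssum n
        ≤ ∑ n ∈ Finset.Ioo x (2*x), ∑ m ∈ Finset.Icc 3 M, ∑ q ∈ Finset.range B,
            (1/(m:ℝ)) * Fq n m q := Finset.sum_le_sum stepA
      _ = ∑ m ∈ Finset.Icc 3 M, ∑ q ∈ Finset.range B, ∑ n ∈ Finset.Ioo x (2*x),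
            (1/(m:ℝ)) * Fq n m q := by
          rw [Finset.sum_comm]
          apply Finset.sum_congr rfl
          intro m _
          rw [Finset.sum_comm]
      _ ≤ ∑ m ∈ Finset.Icc 3 M, ∑ q ∈ Finset.range B,
            (if q < Q then 2*C*y ^ ((11:ℝ)/240)/(3*y) else 0) := by
          apply Finset.sum_le_sum
          intro m hm
          apply Finset.sum_le_sum
          intro q hq
          exact stepC m hm q hq
      _ ≤ ∑ m ∈ Finset.Icc 3 M, (Q:ℝ) * (2*C*y ^ ((11:ℝ)/240)/(3*y)) := by
          apply Finset.sum_le_sum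
          intro m _
          rw [Finset.sum_ite, Finset.sum_const, Finset.sum_const_zero, add_zero, nsmul_eq_mul]
          apply mul_le_mul_of_nonneg_right _ c0
          have : (Finset.filter (fun q => q < Q) (Finset.range B)).card ≤ Q := by
            calc (Finset.filter (fun q => q < Q) (Finset.range B)).card
                ≤ (Finset.range Q).card := by
                  apply Finset.card_le_card
                  intro q hq
                  rw [Finset.mem_filter] at hq
                  exact Finset.mem_range.mpr hq.2
              _ = Q := Finset.card_range Q
          exact_mod_cast this
      _ = ((Finset.Icc 3 M).card : ℝ) * ((Q:ℝ) * (2*C*y ^ ((11:ℝ)/240)/(3*y))) := by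
          rw [Finset.sum_const, nsmul_eq_mul]
      _ ≤ (M:ℝ) * ((Q:ℝ) * (2*C*y ^ ((11:ℝ)/240)/(3*y))) := by
          apply mul_le_mul_of_nonneg_right _ (by positivity)
          have : (Finset.Icc 3 M).card ≤ M := by
            rw [Nat.card_Icc]; omega
          exact_mod_cast this
  -- numeric bound
  have hMy : (M:ℝ) ≤ y ^ ((1:ℝ)/50) := by
    calc (M:ℝ) ≤ 4 * Real.log (2*y) := Nat.floor_le (by positivity)
      _ ≤ y ^ ((1:ℝ)/50) := hx3
  have hQy : (Q:ℝ) ≤ 2 * y ^ ((2:ℝ)/5) := by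
    have h1 : (1:ℝ) ≤ y ^ ((2:ℝ)/5) := Real.one_le_rpow hy1 (by norm_num)
    have : ((⌊y ^ ((2:ℝ)/5)⌋₊ : ℕ):ℝ) ≤ y ^ ((2:ℝ)/5) := Nat.floor_le (by positivity)
    push_cast [hQ]
    linarith
  have hcy : 2*C*y ^ ((11:ℝ)/240)/(3*y) ≤ C * y ^ ((11:ℝ)/240 - 1) := by
    have e : C * y ^ ((11:ℝ)/240 - 1) = C * y ^ ((11:ℝ)/240) / y := by
      rw [Real.rpow_sub hy0, Real.rpow_one, mul_div_assoc]
    rw [e, div_le_div_iff₀ (by positivity) hy0]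
    have h0 : (0:ℝ) ≤ y ^ ((11:ℝ)/240) := Real.rpow_nonneg hy0.le _
    nlinarith [mul_nonneg (mul_nonneg hCpos.le h0) hy0.le]
  have hfinal : ∑ n ∈ Finset.Ioo x (2*x), Ssum n ≤ 2*C*y ^ (-(1:ℝ)/2) := by
    calc ∑ n ∈ Finset.Ioo x (2*x), Ssum n
        ≤ (M:ℝ) * ((Q:ℝ) * (2*C*y ^ ((11:ℝ)/240)/(3*y))) := hsum_le
      _ ≤ y ^ ((1:ℝ)/50) * ((2 * y ^ ((2:ℝ)/5)) * (C * y ^ ((11:ℝ)/240 - 1))) := by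
          apply mul_le_mul hMy _ (by positivity) (by positivity)
          apply mul_le_mul hQy hcy (by positivity) (by positivity)
      _ = 2*C* (y ^ ((1:ℝ)/50) * y ^ ((2:ℝ)/5) * y ^ ((11:ℝ)/240 - 1)) := by ring
      _ = 2*C* y ^ ((1:ℝ)/50 + (2:ℝ)/5 + ((11:ℝ)/240 - 1)) := by
          rw [← Real.rpow_add hy0, ← Real.rpow_add hy0]
      _ ≤ 2*C* y ^ (-(1:ℝ)/2) := by
          apply mul_le_mul_of_nonneg_left _ (by positivity)
          apply Real.rpow_le_rpow_of_exponent_le hy1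
          norm_num
  -- nonnegativity of LHS
  have hS0 : (0:ℝ) ≤ ∑ n ∈ Finset.Ioo x (2*x), Ssum n := by
    apply Finset.sum_nonneg
    intro n _
    rw [Ssum_eq]
    apply Finset.sum_nonneg
    intro m _
    have ht : (0:ℝ) ≤ ∑' q : ℕ, Fq n m q := tsum_nonneg (fun q => Fq_nonneg n m q)
    positivity
  -- endgame
  have hlogy1 : (1:ℝ) ≤ Real.log y := hx6
  have hlogy0 : (0:ℝ) < Real.log y := by linarith
  have hRHS : 2*C*y ^ (-(1:ℝ)/2) ≤
      Real.log (Real.log y) * y ^ (-(1/4:ℝ)) / Real.log y ^ 3 := by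
    rw [le_div_iff₀ (by positivity)]
    have h1 : 2*C*y ^ (-(1:ℝ)/2) * Real.log y ^ 3 = y ^ (-(1:ℝ)/2) * (2*C*(Real.log y)^3) := by
      ring
    rw [h1]
    calc y ^ (-(1:ℝ)/2) * (2*C*(Real.log y)^3) ≤ y ^ (-(1:ℝ)/2) * y ^ ((1:ℝ)/4) := by
          apply mul_le_mul_of_nonneg_left hx4 (Real.rpow_nonneg hy0.le _)
      _ = y ^ (-(1/4:ℝ)) := by rw [← Real.rpow_add hy0]; norm_num
      _ ≤ Real.log (Real.log y) * y ^ (-(1/4:ℝ)) := by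
          apply le_mul_of_one_le_left (Real.rpow_nonneg hy0.le _) hx5
  rw [Real.norm_eq_abs, abs_of_nonneg hS0, one_mul, Real.norm_eq_abs]
  calc ∑ n ∈ Finset.Ioo x (2*x), Ssum n ≤ 2*C*y ^ (-(1:ℝ)/2) := hfinal
    _ ≤ Real.log (Real.log y) * y ^ (-(1/4:ℝ)) / Real.log y ^ 3 := hRHS
    _ ≤ |Real.log (Real.log y) * y ^ (-(1/4:ℝ)) / Real.log y ^ 3| := le_abs_self _
end
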